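/- arXiv:0710.2319 — 7 statements merged into one kernel-verified Lean document; each statement's English description precedes it below -/
import Mathlib

section
/- Let (r_j)_{j∈ℤ} be a sequence of real numbers and suppose there exists C₀ > 0 such that #{j ∈ ℤ : |r_j − μ| ≤ 1} ≤ C₀(1 + |μ|) for all μ ∈ ℝ. Let h : ℝ → ℂ be measurable with |h(t)| ≤ C₁(1 + |t|)^{−4} for all t ∈ ℝ. Then there exists C > 0 such that for all λ ≥ 1, Σ_{j : |r_j| ≤ λ} | ∫_{ℝ∖[−λ,λ]} h(t − r_j) dt | ≤ Cλ. -/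
open Real MeasureTheory

lemma aux_F2_integrable : Integrable (fun x : ℝ => ((1+|x|)^2)⁻¹) := by
  have := integrable_one_add_norm (E := ℝ) (μ := volume) (r := 2) (by norm_num)
  refine this.congr (Filter.Eventually.of_forall fun x => ?_)
  simp only [Real.norm_eq_abs]
  rw [show (-2:ℝ) = -(2:ℝ) by norm_num, Real.rpow_neg (by positivity), Real.rpow_two]

lemma aux_w_summable : Summable (fun m : ℕ => ((1+(m:ℝ))^2)⁻¹) := by
  have := (summable_nat_add_iff 1).mpr (summable_one_div_nat_pow.mpr one_lt_two)
  refine this.congr fun n => ?_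
  push_cast; rw [one_div, add_comm]

/-- If a sequence `(r_j)` satisfies the local counting bound and `h` has
quartic decay, then `Σ_{|r_j| ≤ λ} |∫_{ℝ∖[-λ,λ]} h(t - r_j) dt| ≤ C λ`. -/
theorem tail_integral_sum_bound_low (r : ℤ → ℝ) (C₀ : ℝ) (hC₀ : 0 < C₀)
    (hcount : ∀ μ : ℝ, {j : ℤ | |r j - μ| ≤ 1}.Finite ∧
      (Nat.card {j : ℤ | |r j - μ| ≤ 1} : ℝ) ≤ C₀ * (1 + |μ|))
    (h : ℝ → ℂ) (hmeas : Measurable h) (C₁ : ℝ)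
    (hdecay : ∀ t : ℝ, ‖h t‖ ≤ C₁ * (1 + |t|) ^ (-4 : ℤ)) :
    ∃ C : ℝ, 0 < C ∧ ∀ lam : ℝ, 1 ≤ lam →
      (∑' j : {j : ℤ // |r j| ≤ lam},
        ‖∫ t in (Set.Icc (-lam) lam)ᶜ, h (t - r j)‖) ≤ C * lam := by
  classical
  have hC₁' : (0:ℝ) ≤ max C₁ 0 := le_max_right _ _
  set C₁' : ℝ := max C₁ 0 with hC₁'def
  -- decay with nonneg constant and explicit inverse-powers
  have hdecay' : ∀ t : ℝ, ‖h t‖ ≤ C₁' * (((1+|t|)^2)⁻¹ * ((1+|t|)^2)⁻¹) := by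
    intro t
    have h1 : (0:ℝ) < 1 + |t| := by positivity
    have hz : (1 + |t|) ^ (-4 : ℤ) = ((1+|t|)^2)⁻¹ * ((1+|t|)^2)⁻¹ := by
      rw [← mul_inv, ← pow_add]
      rw [zpow_neg, show ((1+|t|)^(4:ℤ)) = (1+|t|)^(4:ℕ) from zpow_natCast _ 4]
    calc ‖h t‖ ≤ C₁ * (1 + |t|) ^ (-4 : ℤ) := hdecay t
      _ ≤ C₁' * (1 + |t|) ^ (-4 : ℤ) := by
          apply mul_le_mul_of_nonneg_right (le_max_left _ _) (by positivity)
      _ = C₁' * (((1+|t|)^2)⁻¹ * ((1+|t|)^2)⁻¹) := by rw [hz]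
  have hF₂int : Integrable (fun x : ℝ => ((1+|x|)^2)⁻¹) := aux_F2_integrable
  have hF₂nonneg : ∀ x : ℝ, (0:ℝ) ≤ ((1+|x|)^2)⁻¹ := fun x => by positivity
  set K₂ : ℝ := ∫ x : ℝ, ((1+|x|)^2)⁻¹ with hK₂def
  have hK₂ : 0 ≤ K₂ := integral_nonneg hF₂nonneg
  have hwnonneg : ∀ m : ℕ, (0:ℝ) ≤ ((1+(m:ℝ))^2)⁻¹ := fun m => by positivity
  have hwsum : Summable (fun m : ℕ => ((1+(m:ℝ))^2)⁻¹) := aux_w_summable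
  set K₃ : ℝ := ∑' m : ℕ, ((1+(m:ℝ))^2)⁻¹ with hK₃def
  have hK₃ : 0 ≤ K₃ := tsum_nonneg hwnonneg
  set B : ℝ := 4 * (C₁' * K₂) * C₀ * K₃ with hBdef
  have hB : 0 ≤ B := by positivity
  refine ⟨max B 1, lt_of_lt_of_le one_pos (le_max_right _ _), fun lam hlam => ?_⟩
  have hlam0 : (0:ℝ) < lam := lt_of_lt_of_le one_pos hlam
  -- the index set is finite
  have hSfin : {j : ℤ | |r j| ≤ lam}.Finite := by
    have hsub : {j : ℤ | |r j| ≤ lam} ⊆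
        ⋃ m ∈ (Finset.Icc (-((⌈lam⌉₊:ℤ)+1)) ((⌈lam⌉₊:ℤ)+1) : Finset ℤ),
          {j : ℤ | |r j - (m:ℝ)| ≤ 1} := by
      intro j hj
      have hj' : |r j| ≤ lam := hj
      have h1 : (⌊r j⌋ : ℝ) ≤ r j := Int.floor_le _
      have h2 : r j < (⌊r j⌋ : ℝ) + 1 := Int.lt_floor_add_one _
      have habs : |r j - (⌊r j⌋ : ℝ)| ≤ 1 := by
        rw [abs_le]; constructor <;> linarith
      have hle : r j ≤ lam := (abs_le.mp hj').2
      have hge : -lam ≤ r j := (abs_le.mp hj').1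
      have hceil : lam ≤ (⌈lam⌉₊ : ℝ) := Nat.le_ceil _
      have hmem : ⌊r j⌋ ∈ (Finset.Icc (-((⌈lam⌉₊:ℤ)+1)) ((⌈lam⌉₊:ℤ)+1) : Finset ℤ) := by
        rw [Finset.mem_Icc]
        constructor
        · have hc : (-((⌈lam⌉₊:ℝ) + 1)) ≤ ((⌊r j⌋ : ℤ) : ℝ) := by push_cast; linarith
          exact_mod_cast hc
        · have hc : ((⌊r j⌋ : ℤ) : ℝ) ≤ ((⌈lam⌉₊:ℝ) + 1) := by push_cast; linarith
          exact_mod_cast hc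
      exact Set.mem_biUnion hmem habs
    exact Set.Finite.subset
      (((Finset.Icc (-((⌈lam⌉₊:ℤ)+1)) ((⌈lam⌉₊:ℤ)+1)) : Finset ℤ).finite_toSet.biUnion
        fun m _ => (hcount (m:ℝ)).1) hsub
  haveI : Fintype {j : ℤ // |r j| ≤ lam} := hSfin.fintype
  set T : Finset ℤ := hSfin.toFinset with hTdef
  set f : ℤ → ℝ := fun j => ‖∫ t in (Set.Icc (-lam) lam)ᶜ, h (t - r j)‖ with hfdef
  have htsum : (∑' j : {j : ℤ // |r j| ≤ lam}, f j) = ∑ j ∈ T, f j := by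
    rw [tsum_fintype]
    have hTeq : Finset.univ.map (Function.Embedding.subtype fun j : ℤ => |r j| ≤ lam) = T := by
      ext j
      simp [hTdef, Set.Finite.mem_toFinset]
    rw [← hTeq, Finset.sum_map]
    rfl
  rw [htsum]
  -- per-term bound
  have hterm : ∀ j ∈ T, f j ≤ (C₁' * K₂) * ((1+(⌊lam - |r j|⌋₊:ℝ))^2)⁻¹ := by
    intro j hj
    have hj' : |r j| ≤ lam := by
      have := Set.Finite.mem_toFinset hSfin |>.mp hj
      exact this
    have ha : (0:ℝ) ≤ lam - |r j| := by linarith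
    set a : ℝ := lam - |r j| with hadef
    set g : ℝ → ℝ := fun t => (C₁' * ((1+a)^2)⁻¹) * ((1+|t - r j|)^2)⁻¹ with hgdef
    have hgint : Integrable g := (hF₂int.comp_sub_right (r j)).const_mul _
    have hgnonneg : ∀ t, 0 ≤ g t := fun t => by
      simp only [hgdef]; positivity
    have hpt : ∀ t ∈ (Set.Icc (-lam) lam)ᶜ, ‖h (t - r j)‖ ≤ g t := by
      intro t ht
      have hnot : ¬(-lam ≤ t ∧ t ≤ lam) := by simpa [Set.mem_Icc] using ht
      have htout : lam < |t| := by
        rcases lt_or_ge t (-lam) with h1 | h1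
        · rw [abs_of_neg (by linarith)]; linarith
        · have h2 : lam < t := by
            by_contra h2; push_neg at h2; exact hnot ⟨h1, h2⟩
          rw [abs_of_pos (by linarith)]; linarith
      have hdist : a ≤ |t - r j| := by
        have := abs_sub_abs_le_abs_sub t (r j)
        rw [hadef]; linarith
      have hkey : ((1+|t - r j|)^2)⁻¹ ≤ ((1+a)^2)⁻¹ := by
        apply inv_anti₀ (by positivity)
        apply pow_le_pow_left₀ (by positivity) (by linarith)
      calc ‖h (t - r j)‖
          ≤ C₁' * (((1+|t - r j|)^2)⁻¹ * ((1+|t - r j|)^2)⁻¹) := hdecay' _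
        _ ≤ C₁' * (((1+a)^2)⁻¹ * ((1+|t - r j|)^2)⁻¹) := by
            apply mul_le_mul_of_nonneg_left _ hC₁'
            exact mul_le_mul_of_nonneg_right hkey (by positivity)
        _ = g t := by simp only [hgdef]; ring
    have hmeasf : AEStronglyMeasurable (fun t => ‖h (t - r j)‖) volume :=
      ((hmeas.comp (measurable_sub_const (r j))).norm).aestronglyMeasurable
    have hs : MeasurableSet ((Set.Icc (-lam) lam)ᶜ) := measurableSet_Icc.compl
    have hfint : IntegrableOn (fun t => ‖h (t - r j)‖) ((Set.Icc (-lam) lam)ᶜ) := by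
      apply Integrable.mono hgint.integrableOn hmeasf.restrict
      rw [ae_restrict_iff' hs]
      exact Filter.Eventually.of_forall fun t ht => by
        rw [norm_norm, Real.norm_eq_abs, abs_of_nonneg (hgnonneg t)]
        exact hpt t ht
    have step1 : f j ≤ ∫ t in (Set.Icc (-lam) lam)ᶜ, ‖h (t - r j)‖ :=
      norm_integral_le_integral_norm _
    have step2 : (∫ t in (Set.Icc (-lam) lam)ᶜ, ‖h (t - r j)‖)
        ≤ ∫ t in (Set.Icc (-lam) lam)ᶜ, g t :=
      setIntegral_mono_on hfint hgint.integrableOn hs hpt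
    have step3 : (∫ t in (Set.Icc (-lam) lam)ᶜ, g t) ≤ ∫ t, g t :=
      setIntegral_le_integral hgint (Filter.Eventually.of_forall hgnonneg)
    have step4 : (∫ t, g t) = (C₁' * ((1+a)^2)⁻¹) * K₂ := by
      rw [hgdef]
      rw [integral_const_mul, hK₂def,
        integral_sub_right_eq_self (fun x : ℝ => ((1+|x|)^2)⁻¹) (r j)]
    have hka : ((⌊a⌋₊ : ℝ)) ≤ a := Nat.floor_le ha
    have step5 : ((1+a)^2)⁻¹ ≤ ((1+(⌊a⌋₊:ℝ))^2)⁻¹ := by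
      apply inv_anti₀ (by positivity)
      apply pow_le_pow_left₀ (by positivity) (by linarith)
    calc f j ≤ (C₁' * ((1+a)^2)⁻¹) * K₂ := by linarith
      _ = C₁' * K₂ * ((1+a)^2)⁻¹ := by ring
      _ ≤ C₁' * K₂ * ((1+(⌊a⌋₊:ℝ))^2)⁻¹ := by
          apply mul_le_mul_of_nonneg_left step5 (by positivity)
  -- sum the per-term bounds
  have hsum1 : (∑ j ∈ T, f j)
      ≤ (C₁' * K₂) * ∑ j ∈ T, ((1+(⌊lam - |r j|⌋₊:ℝ))^2)⁻¹ := by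
    rw [Finset.mul_sum]
    exact Finset.sum_le_sum hterm
  have hmap : ∀ j ∈ T, ⌊lam - |r j|⌋₊ ∈ Finset.range (⌈lam⌉₊ + 1) := by
    intro j hj
    have hj' : |r j| ≤ lam := Set.Finite.mem_toFinset hSfin |>.mp hj
    rw [Finset.mem_range]
    have h1 : ⌊lam - |r j|⌋₊ ≤ ⌊lam⌋₊ := Nat.floor_mono (by linarith [abs_nonneg (r j)])
    have h2 : ⌊lam⌋₊ ≤ ⌈lam⌉₊ := Nat.floor_le_ceil _
    omega
  have hfiber : (∑ j ∈ T, ((1+(⌊lam - |r j|⌋₊:ℝ))^2)⁻¹)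
      = ∑ m ∈ Finset.range (⌈lam⌉₊ + 1),
          ∑ j ∈ T.filter (fun j => ⌊lam - |r j|⌋₊ = m), ((1+(⌊lam - |r j|⌋₊:ℝ))^2)⁻¹ :=
    (Finset.sum_fiberwise_of_maps_to hmap _).symm
  -- cardinality bound for each fiber
  have hcard : ∀ m ∈ Finset.range (⌈lam⌉₊ + 1),
      ((T.filter (fun j => ⌊lam - |r j|⌋₊ = m)).card : ℝ) ≤ 2 * C₀ * (1 + lam) := by
    intro m hm
    obtain ⟨hAfin, hAcard⟩ := hcount (lam - m)
    obtain ⟨hBfin, hBcard⟩ := hcount (-(lam - m))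
    have hmR : (m : ℝ) ≤ lam + 1 := by
      have h1 : m < ⌈lam⌉₊ + 1 := Finset.mem_range.mp hm
      have h2 : (m:ℝ) ≤ (⌈lam⌉₊ : ℝ) := by exact_mod_cast Nat.lt_add_one_iff.mp h1
      have h3 : (⌈lam⌉₊ : ℝ) < lam + 1 := Nat.ceil_lt_add_one (by linarith)
      linarith
    have hm0 : (0:ℝ) ≤ (m:ℝ) := Nat.cast_nonneg m
    have hμabs : |lam - (m:ℝ)| ≤ lam := by
      rw [abs_le]
      constructor
      · linarith
      · linarith
    have hsub : (T.filter (fun j => ⌊lam - |r j|⌋₊ = m))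
        ⊆ (hAfin.union hBfin).toFinset := by
      intro j hj
      rw [Finset.mem_filter] at hj
      obtain ⟨hjS, hjm⟩ := hj
      have hj' : |r j| ≤ lam := Set.Finite.mem_toFinset hSfin |>.mp hjS
      have ha : (0:ℝ) ≤ lam - |r j| := by linarith
      have hfl := (Nat.floor_eq_iff ha).mp hjm
      have h1 : (m:ℝ) ≤ lam - |r j| := hfl.1
      have h2 : lam - |r j| < m + 1 := hfl.2
      rw [Set.Finite.toFinset_union hAfin hBfin, Finset.mem_union]
      rcases le_or_gt 0 (r j) with hr0 | hr0
      · left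
        rw [Set.Finite.mem_toFinset]
        have e : |r j| = r j := abs_of_nonneg hr0
        show |r j - (lam - m)| ≤ 1
        rw [abs_le]
        constructor
        · linarith [e ▸ h2]
        · linarith [e ▸ h1]
      · right
        rw [Set.Finite.mem_toFinset]
        have e : |r j| = -r j := abs_of_neg hr0
        show |r j - (-(lam - m))| ≤ 1
        rw [sub_neg_eq_add, abs_le]
        constructor
        · linarith [e ▸ h1]
        · linarith [e ▸ h2]
    have hAc : (hAfin.toFinset.card : ℝ) ≤ C₀ * (1 + lam) := by
      have e : hAfin.toFinset.card = Nat.card {j : ℤ | |r j - (lam - m)| ≤ 1} := by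
        rw [Nat.card_coe_set_eq, Set.ncard_eq_toFinset_card _ hAfin]
      rw [e]
      calc (Nat.card {j : ℤ | |r j - (lam - (m:ℝ))| ≤ 1} : ℝ)
          ≤ C₀ * (1 + |lam - (m:ℝ)|) := hAcard
        _ ≤ C₀ * (1 + lam) := by
            apply mul_le_mul_of_nonneg_left (by linarith) hC₀.le
    have hBc : (hBfin.toFinset.card : ℝ) ≤ C₀ * (1 + lam) := by
      have e : hBfin.toFinset.card = Nat.card {j : ℤ | |r j - (-(lam - m))| ≤ 1} := by
        rw [Nat.card_coe_set_eq, Set.ncard_eq_toFinset_card _ hBfin]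
      rw [e]
      calc (Nat.card {j : ℤ | |r j - (-(lam - (m:ℝ)))| ≤ 1} : ℝ)
          ≤ C₀ * (1 + |(-(lam - (m:ℝ)))|) := hBcard
        _ ≤ C₀ * (1 + lam) := by
            apply mul_le_mul_of_nonneg_left _ hC₀.le
            rw [abs_neg]; linarith
    have hcardle : (T.filter (fun j => ⌊lam - |r j|⌋₊ = m)).card
        ≤ hAfin.toFinset.card + hBfin.toFinset.card := by
      calc (T.filter (fun j => ⌊lam - |r j|⌋₊ = m)).card
          ≤ (hAfin.union hBfin).toFinset.card := Finset.card_le_card hsub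
        _ ≤ hAfin.toFinset.card + hBfin.toFinset.card := by
            rw [Set.Finite.toFinset_union hAfin hBfin]; exact Finset.card_union_le _ _
    have hc : ((T.filter (fun j => ⌊lam - |r j|⌋₊ = m)).card : ℝ)
        ≤ (hAfin.toFinset.card : ℝ) + (hBfin.toFinset.card : ℝ) := by exact_mod_cast hcardle
    linarith
  -- combine
  have hsum2 : (∑ j ∈ T, ((1+(⌊lam - |r j|⌋₊:ℝ))^2)⁻¹) ≤ 2 * C₀ * (1 + lam) * K₃ := by
    rw [hfiber]
    calc (∑ m ∈ Finset.range (⌈lam⌉₊ + 1),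
            ∑ j ∈ T.filter (fun j => ⌊lam - |r j|⌋₊ = m), ((1+(⌊lam - |r j|⌋₊:ℝ))^2)⁻¹)
        ≤ ∑ m ∈ Finset.range (⌈lam⌉₊ + 1), 2 * C₀ * (1 + lam) * ((1+(m:ℝ))^2)⁻¹ := by
          apply Finset.sum_le_sum
          intro m hm
          have e : (∑ j ∈ T.filter (fun j => ⌊lam - |r j|⌋₊ = m), ((1+(⌊lam - |r j|⌋₊:ℝ))^2)⁻¹)
              = ((T.filter (fun j => ⌊lam - |r j|⌋₊ = m)).card : ℝ) * ((1+(m:ℝ))^2)⁻¹ := by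
            rw [Finset.sum_congr rfl (fun j hj => by
              rw [(Finset.mem_filter.mp hj).2]), Finset.sum_const, nsmul_eq_mul]
          rw [e]
          exact mul_le_mul_of_nonneg_right (hcard m hm) (hwnonneg m)
      _ = 2 * C₀ * (1 + lam) * ∑ m ∈ Finset.range (⌈lam⌉₊ + 1), ((1+(m:ℝ))^2)⁻¹ := by
          rw [← Finset.mul_sum]
      _ ≤ 2 * C₀ * (1 + lam) * K₃ := by
          apply mul_le_mul_of_nonneg_left
            (Summable.sum_le_tsum _ (fun m _ => hwnonneg m) hwsum)
          positivity
  have hfinal : (∑ j ∈ T, f j) ≤ B * lam := by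
    have h1p : 1 + lam ≤ 2 * lam := by linarith
    calc (∑ j ∈ T, f j)
        ≤ (C₁' * K₂) * (2 * C₀ * (1 + lam) * K₃) :=
          le_trans hsum1 (mul_le_mul_of_nonneg_left hsum2 (by positivity))
      _ ≤ (C₁' * K₂) * (2 * C₀ * (2 * lam) * K₃) := by
          apply mul_le_mul_of_nonneg_left _ (by positivity)
          apply mul_le_mul_of_nonneg_right _ hK₃
          apply mul_le_mul_of_nonneg_left h1p (by positivity)
      _ = B * lam := by rw [hBdef]; ring
  calc (∑ j ∈ T, f j) ≤ B * lam := hfinal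
    _ ≤ max B 1 * lam := mul_le_mul_of_nonneg_right (le_max_left _ _) hlam0.le
end

section
/- Let (r_j)_{j∈ℤ} be a sequence of real numbers and suppose there exists C₀ > 0 such that #{j ∈ ℤ : |r_j − μ| ≤ 1} ≤ C₀(1 + |μ|) for all μ ∈ ℝ. Let h : ℝ → ℂ be measurable with |h(t)| ≤ C₁(1 + |t|)^{−4} for all t ∈ ℝ. Then there exists C > 0 such that for all λ ≥ 1, Σ_{j : |r_j| > λ} | ∫_{−λ}^{λ} h(t − r_j) dt | ≤ Cλ. -/
/-!
For `λ < |r|`, integrating the decay bound over `[-λ, λ]` gives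
`|∫_{-λ}^{λ} h(t - r) dt| ≲ (1 + |r| - λ)⁻³`, with no factor `λ`: the interval stays on one
side of `r`. Grouping the `j` with `|r_j| > λ` into shells `⌊|r_j| - λ⌋ = n`, the counting
bound at `μ = ±(λ + n)` puts at most `2C₀(1 + λ + n) ≤ 2C₀(1 + λ)(1 + n)` of them in each
shell, so the sum is `≲ (1 + λ) Σₙ (1 + n)⁻²`.
-/

open Real MeasureTheory Finset

lemma continuous_one_add_abs_sub_zpow (r : ℝ) (m : ℤ) :
    Continuous fun t : ℝ => (1 + |t - r|) ^ m :=
  (continuous_const.add (continuous_id.sub continuous_const).abs).zpow₀ m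
    fun t => Or.inl (by positivity : (0 : ℝ) < 1 + |t - r|).ne'

lemma integral_one_add_abs_sub_zpow_neg_four_le {a b r : ℝ} (hab : a ≤ b) (hbr : b ≤ r) :
    ∫ t in a..b, (1 + |t - r|) ^ (-4 : ℤ) ≤ (1 + (r - b)) ^ (-3 : ℤ) / 3 := by
  have hderiv : ∀ t ∈ Set.uIcc a b,
      HasDerivAt (fun t => (1 + (r - t)) ^ (-3 : ℤ) / 3) ((1 + |t - r|) ^ (-4 : ℤ)) t := by
    intro t ht
    have htr : t ≤ r := (Set.uIcc_of_le hab ▸ ht).2.trans hbr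
    have hpos : 0 < 1 + (r - t) := by linarith
    have hlin : HasDerivAt (fun t : ℝ => 1 + (r - t)) (-1) t := by
      simpa using ((hasDerivAt_id t).const_sub r).const_add 1
    refine (((hasDerivAt_zpow (-3) _ (Or.inl hpos.ne')).comp t hlin).div_const 3).congr_deriv ?_
    rw [abs_of_nonpos (sub_nonpos.2 htr)]
    norm_num
  rw [intervalIntegral.integral_eq_sub_of_hasDerivAt hderiv
    ((continuous_one_add_abs_sub_zpow r _).intervalIntegrable a b)]
  have : 0 ≤ (1 + (r - a)) ^ (-3 : ℤ) := by
    have : 0 ≤ 1 + (r - a) := by linarith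
    positivity
  linarith

lemma integral_symm_one_add_abs_sub_zpow_neg_four_le {lam r : ℝ} (hlam : 0 ≤ lam)
    (hr : lam < |r|) :
    ∫ t in (-lam)..lam, (1 + |t - r|) ^ (-4 : ℤ) ≤ (1 + (|r| - lam)) ^ (-3 : ℤ) / 3 := by
  rcases le_or_gt 0 r with hr0 | hr0
  · rw [abs_of_nonneg hr0] at hr ⊢
    exact integral_one_add_abs_sub_zpow_neg_four_le (by linarith) hr.le
  · rw [abs_of_neg hr0] at hr ⊢
    -- the reflection `t ↦ -t` puts `-r` to the right of the interval
    have hrefl : ∫ t in (-lam)..lam, (1 + |t - r|) ^ (-4 : ℤ)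
        = ∫ t in (-lam)..lam, (1 + |t - -r|) ^ (-4 : ℤ) := by
      have := intervalIntegral.integral_comp_neg (a := -lam) (b := lam)
        fun t => (1 + |t - -r|) ^ (-4 : ℤ)
      rw [neg_neg] at this
      rw [← this]
      congr 1 with t
      rw [← abs_neg]
      ring_nf
    rw [hrefl]
    exact integral_one_add_abs_sub_zpow_neg_four_le (by linarith) hr.le

lemma norm_integral_comp_sub_le_of_decay {E : Type*} [NormedAddCommGroup E] [NormedSpace ℝ E]
    {h : ℝ → E} {C₁ : ℝ} (hC₁ : 0 ≤ C₁) (hdecay : ∀ t, ‖h t‖ ≤ C₁ * (1 + |t|) ^ (-4 : ℤ))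
    {lam r : ℝ} (hlam : 0 ≤ lam) (hr : lam < |r|) :
    ‖∫ t in (-lam)..lam, h (t - r)‖ ≤ C₁ / 3 * (1 + (|r| - lam)) ^ (-3 : ℤ) :=
  calc ‖∫ t in (-lam)..lam, h (t - r)‖
      ≤ ∫ t in (-lam)..lam, C₁ * (1 + |t - r|) ^ (-4 : ℤ) :=
        intervalIntegral.norm_integral_le_of_norm_le (by linarith)
          (.of_forall fun t _ => hdecay (t - r))
          ((continuous_const.mul (continuous_one_add_abs_sub_zpow r _)).intervalIntegrable _ _)
    _ = C₁ * ∫ t in (-lam)..lam, (1 + |t - r|) ^ (-4 : ℤ) := intervalIntegral.integral_const_mul _ _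
    _ ≤ C₁ * ((1 + (|r| - lam)) ^ (-3 : ℤ) / 3) :=
        mul_le_mul_of_nonneg_left (integral_symm_one_add_abs_sub_zpow_neg_four_le hlam hr) hC₁
    _ = C₁ / 3 * (1 + (|r| - lam)) ^ (-3 : ℤ) := by ring

lemma sum_one_add_zpow_neg_two_le_two (v : Finset ℕ) :
    ∑ n ∈ v, (1 + (n : ℝ)) ^ (-2 : ℤ) ≤ 2 := by
  set N := v.sup id + 1
  calc ∑ n ∈ v, (1 + (n : ℝ)) ^ (-2 : ℤ)
      ≤ ∑ n ∈ range N, (1 + (n : ℝ)) ^ (-2 : ℤ) :=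
        sum_le_sum_of_subset_of_nonneg
          (fun n hn => mem_range.2 (Nat.lt_succ_of_le (le_sup (f := id) hn)))
          fun n _ _ => by positivity
    _ = ∑ i ∈ Ioo 0 (N + 1), ((i : ℝ) ^ 2)⁻¹ := by
        rw [← Finset.Ico_add_one_left_eq_Ioo, sum_Ico_eq_sum_range]
        simp [add_comm]
    _ ≤ 2 := by simpa using sum_Ioo_inv_sq_le (α := ℝ) 0 (N + 1)

lemma summable_and_tsum_le_of_card_fiber_le {ι : Type*} {f : ι → ℝ} (k : ι → ℕ) {A B : ℝ}
    (hA : 0 ≤ A) (hf₀ : ∀ i, 0 ≤ f i) (hf : ∀ i, f i ≤ A * (1 + (k i : ℝ)) ^ (-3 : ℤ))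
    (hcard : ∀ (n : ℕ) (s : Finset ι), (∀ i ∈ s, k i = n) → (#s : ℝ) ≤ B * (1 + n)) :
    Summable f ∧ ∑' i, f i ≤ 2 * A * B := by
  have hB : 0 ≤ B := by simpa using hcard 0 ∅ (by simp)
  have hsum : ∀ u : Finset ι, ∑ i ∈ u, f i ≤ 2 * A * B := fun u =>
    calc ∑ i ∈ u, f i
        ≤ ∑ i ∈ u, A * (1 + (k i : ℝ)) ^ (-3 : ℤ) := sum_le_sum fun i _ => hf i
      _ = ∑ n ∈ u.image k, #{i ∈ u | k i = n} • (A * (1 + (n : ℝ)) ^ (-3 : ℤ)) :=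
          sum_comp (fun n : ℕ => A * (1 + (n : ℝ)) ^ (-3 : ℤ)) k
      _ ≤ ∑ n ∈ u.image k, B * (1 + n) * (A * (1 + (n : ℝ)) ^ (-3 : ℤ)) := by
          refine sum_le_sum fun n _ => ?_
          rw [nsmul_eq_mul]
          exact mul_le_mul_of_nonneg_right (hcard n _ fun i hi => (mem_filter.1 hi).2)
            (by positivity)
      _ = A * B * ∑ n ∈ u.image k, (1 + (n : ℝ)) ^ (-2 : ℤ) := by
          rw [mul_sum]
          refine sum_congr rfl fun n _ => ?_
          rw [show (-2 : ℤ) = 1 + -3 by norm_num, zpow_add₀ (by positivity), zpow_one]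
          ring
      _ ≤ A * B * 2 := mul_le_mul_of_nonneg_left (sum_one_add_zpow_neg_two_le_two _) (by positivity)
      _ = 2 * A * B := by ring
  exact ⟨summable_of_sum_le hf₀ hsum, (summable_of_sum_le hf₀ hsum).tsum_le_of_sum_le hsum⟩

lemma abs_sub_le_or_abs_sub_neg_le_of_abs_abs_sub_le {x c ε : ℝ} (h : |(|x|) - c| ≤ ε) :
    |x - c| ≤ ε ∨ |x - -c| ≤ ε := by
  rw [abs_le] at h
  rcases abs_cases x with ⟨hx, -⟩ | ⟨hx, -⟩
  · exact .inl (abs_le.2 ⟨by linarith, by linarith⟩)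
  · exact .inr (abs_le.2 ⟨by linarith, by linarith⟩)

lemma card_le_of_floor_abs_sub_eq {r : ℤ → ℝ} {C₀ : ℝ}
    (hcount : ∀ μ : ℝ, {j : ℤ | |r j - μ| ≤ 1}.Finite ∧
      (Nat.card {j : ℤ | |r j - μ| ≤ 1} : ℝ) ≤ C₀ * (1 + |μ|))
    (hC₀ : 0 ≤ C₀) {lam : ℝ} (hlam : 0 ≤ lam) (n : ℕ) (s : Finset {j : ℤ // lam < |r j|})
    (hs : ∀ j ∈ s, ⌊|r j| - lam⌋₊ = n) :
    (#s : ℝ) ≤ 2 * C₀ * (1 + lam) * (1 + n) := by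
  set c := lam + n with hc_def
  have hsub : (s.map (.subtype _) : Set ℤ) ⊆ {j | |r j - c| ≤ 1} ∪ {j | |r j - -c| ≤ 1} := by
    intro j hj
    obtain ⟨⟨j, hjlam⟩, hjs, rfl⟩ := mem_map.1 (mem_coe.1 hj)
    show |r j - c| ≤ 1 ∨ |r j - -c| ≤ 1
    have hfloor := hs _ hjs
    have hlo : (n : ℝ) ≤ |r j| - lam := hfloor ▸ Nat.floor_le (by linarith)
    have hhi : |r j| - lam < n + 1 := hfloor ▸ Nat.lt_floor_add_one _
    exact abs_sub_le_or_abs_sub_neg_le_of_abs_abs_sub_le (abs_le.2 ⟨by linarith, by linarith⟩)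
  have hcard : #s ≤ {j | |r j - c| ≤ 1}.ncard + {j | |r j - -c| ≤ 1}.ncard := by
    rw [← card_map (.subtype _), ← Set.ncard_coe_finset]
    exact (Set.ncard_le_ncard hsub ((hcount c).1.union (hcount (-c)).1)).trans
      (Set.ncard_union_le _ _)
  have hc : |c| = c := abs_of_nonneg (by positivity)
  have hplus : ({j | |r j - c| ≤ 1}.ncard : ℝ) ≤ C₀ * (1 + c) := by
    simpa [Nat.card_coe_set_eq, hc] using (hcount c).2
  have hminus : ({j | |r j - -c| ≤ 1}.ncard : ℝ) ≤ C₀ * (1 + c) := by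
    simpa [Nat.card_coe_set_eq, hc] using (hcount (-c)).2
  have hs_le : (#s : ℝ) ≤ 2 * C₀ * (1 + c) := by
    have := (Nat.cast_le (α := ℝ)).2 hcard
    push_cast at this
    linarith
  nlinarith [mul_nonneg hC₀ (mul_nonneg hlam n.cast_nonneg)]

theorem tail_integral_sum_bound_high_general (r : ℤ → ℝ) (C₀ : ℝ)
    (hcount : ∀ μ : ℝ, {j : ℤ | |r j - μ| ≤ 1}.Finite ∧
      (Nat.card {j : ℤ | |r j - μ| ≤ 1} : ℝ) ≤ C₀ * (1 + |μ|))
    (h : ℝ → ℂ) (C₁ : ℝ)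
    (hdecay : ∀ t : ℝ, ‖h t‖ ≤ C₁ * (1 + |t|) ^ (-4 : ℤ)) :
    ∃ C : ℝ, 0 < C ∧ ∀ lam : ℝ, 1 ≤ lam →
      Summable (fun j : {j : ℤ // lam < |r j|} =>
        ‖∫ t in (-lam)..lam, h (t - r j)‖) ∧
      (∑' j : {j : ℤ // lam < |r j|},
        ‖∫ t in (-lam)..lam, h (t - r j)‖) ≤ C * lam := by
  have hC₀ : 0 ≤ C₀ := by simpa using (Nat.cast_nonneg _).trans (hcount 0).2
  have hC₁ : 0 ≤ C₁ := by simpa using (norm_nonneg _).trans (hdecay 0)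
  refine ⟨3 * C₀ * C₁ + 1, by positivity, fun lam hlam => ?_⟩
  have hterm (j : {j : ℤ // lam < |r j|}) : ‖∫ t in (-lam)..lam, h (t - r j)‖
      ≤ C₁ / 3 * (1 + (⌊|r j| - lam⌋₊ : ℝ)) ^ (-3 : ℤ) := by
    have hfloor := Nat.floor_le (sub_nonneg.2 j.2.le)
    refine (norm_integral_comp_sub_le_of_decay hC₁ hdecay (by linarith) j.2).trans ?_
    gcongr
    rw [zpow_neg, zpow_neg]
    exact inv_anti₀ (by positivity) (zpow_le_zpow_left₀ (by norm_num) (by positivity) (by linarith))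
  obtain ⟨hsummable, htsum⟩ := summable_and_tsum_le_of_card_fiber_le
    (fun j : {j : ℤ // lam < |r j|} => ⌊|r j| - lam⌋₊) (by positivity)
    (fun _ => norm_nonneg _) hterm (card_le_of_floor_abs_sub_eq hcount hC₀ (by linarith))
  refine ⟨hsummable, htsum.trans ?_⟩
  nlinarith [mul_nonneg hC₀ hC₁]

/-- If a sequence `(r_j)` satisfies the local counting bound and `h` has
quartic decay, then `Σ_{|r_j| > λ} |∫_{-λ}^{λ} h(t - r_j) dt| ≤ C λ`. -/
theorem tail_integral_sum_bound_high (r : ℤ → ℝ) (C₀ : ℝ) (hC₀ : 0 < C₀)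
    (hcount : ∀ μ : ℝ, {j : ℤ | |r j - μ| ≤ 1}.Finite ∧
      (Nat.card {j : ℤ | |r j - μ| ≤ 1} : ℝ) ≤ C₀ * (1 + |μ|))
    (h : ℝ → ℂ) (hmeas : Measurable h) (C₁ : ℝ)
    (hdecay : ∀ t : ℝ, ‖h t‖ ≤ C₁ * (1 + |t|) ^ (-4 : ℤ)) :
    ∃ C : ℝ, 0 < C ∧ ∀ lam : ℝ, 1 ≤ lam →
      Summable (fun j : {j : ℤ // lam < |r j|} =>
        ‖∫ t in (-lam)..lam, h (t - r j)‖) ∧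
      (∑' j : {j : ℤ // lam < |r j|},
        ‖∫ t in (-lam)..lam, h (t - r j)‖) ≤ C * lam :=
  tail_integral_sum_bound_high_general r C₀ hcount h C₁ hdecay
end

section
/- Let h : ℝ → ℂ be measurable with ∫_ℝ h(t) dt = 1 and |h(t)| ≤ C₁(1 + |t|)^{−3} for all t ∈ ℝ, and let p : ℝ → ℝ be continuous with p(−r) = p(r) and |p(r)| ≤ C₂(1 + |r|) for all r ∈ ℝ. Then there exists C > 0 such that for all λ ≥ 1, | ∫_{−λ}^{λ} ∫_ℝ h(t − r) p(r) dr dt − ∫_{−λ}^{λ} p(r) dr | ≤ Cλ. -/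
/-!
By Fubini and translation invariance, the difference equals `∫ h(u) (P(u) - P(0)) du` with
`P(u) = ∫_{-λ}^{λ} p(t - u) dt`, because `∫ h = 1`. For `|u| ≤ λ`, `P(u) - P(0)` is the
difference of the integrals of `p` over the two strips `[-λ - u, -λ]` and `[λ - u, λ]`, hence
`O(λ |u|)`; for `|u| ≥ λ`, both `P(u)` and `P(0)` are `O(λ (λ + |u|))`. So in all cases
`|P(u) - P(0)| ≤ 8 C₂ λ (1 + |u|)`, and cubic decay gives `h` a finite first moment.
-/

open MeasureTheory Set

section IntervalIntegral

variable {E : Type*} [NormedAddCommGroup E] [NormedSpace ℝ E] {f : ℝ → E} {C : ℝ}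

theorem norm_intervalIntegral_le_of_norm_le_mul_one_add_abs
    (hf : ∀ r, ‖f r‖ ≤ C * (1 + |r|)) {a b M : ℝ} (ha : |a| ≤ M) (hb : |b| ≤ M) :
    ‖∫ x in a..b, f x‖ ≤ C * (1 + M) * |b - a| := by
  have hC : 0 ≤ C := by simpa using (norm_nonneg _).trans (hf 0)
  refine intervalIntegral.norm_integral_le_of_norm_le_const fun x hx => (hf x).trans ?_
  have hmin : -M ≤ min a b := le_min (abs_le.1 ha).1 (abs_le.1 hb).1
  have hmax : max a b ≤ M := max_le (abs_le.1 ha).2 (abs_le.1 hb).2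
  have hxM : |x| ≤ M := abs_le.2 ⟨by linarith [hx.1], by linarith [hx.2]⟩
  gcongr

theorem intervalIntegral_comp_sub_right_sub (hf : Continuous f) (a b u : ℝ) :
    (∫ t in a..b, f (t - u)) - ∫ t in a..b, f t
      = (∫ x in a - u..a, f x) - ∫ x in b - u..b, f x := by
  rw [intervalIntegral.integral_comp_sub_right]
  exact intervalIntegral.integral_interval_sub_interval_comm (hf.intervalIntegrable _ _)
    (hf.intervalIntegrable _ _) (hf.intervalIntegrable _ _)

theorem norm_intervalIntegral_comp_sub_sub_le (hf : Continuous f)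
    (hgrowth : ∀ r, ‖f r‖ ≤ C * (1 + |r|)) {lam : ℝ} (hlam : 0 ≤ lam) (u : ℝ) :
    ‖(∫ t in (-lam)..lam, f (t - u)) - ∫ t in (-lam)..lam, f t‖
      ≤ 8 * C * lam * (1 + |u|) := by
  have hC : 0 ≤ C := by simpa using (norm_nonneg _).trans (hgrowth 0)
  have hlam_abs : |lam| ≤ lam + |u| := by rw [abs_of_nonneg hlam]; linarith [abs_nonneg u]
  have hneg_lam_abs : |-lam| ≤ lam + |u| := by rwa [abs_neg]
  have hsub_lam : |lam - u| ≤ lam + |u| := (abs_sub _ _).trans (by rw [abs_of_nonneg hlam])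
  have hsub_neg_lam : |-lam - u| ≤ lam + |u| :=
    (abs_sub _ _).trans (by rw [abs_neg, abs_of_nonneg hlam])
  rcases le_total |u| lam with hsmall | hlarge
  · rw [intervalIntegral_comp_sub_right_sub hf]
    have hleft := norm_intervalIntegral_le_of_norm_le_mul_one_add_abs hgrowth hsub_neg_lam
      hneg_lam_abs
    have hright := norm_intervalIntegral_le_of_norm_le_mul_one_add_abs hgrowth hsub_lam hlam_abs
    rw [show -lam - (-lam - u) = u by ring] at hleft
    rw [show lam - (lam - u) = u by ring] at hright
    calc _ ≤ _ := norm_sub_le _ _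
      _ ≤ 2 * C * (1 + (lam + |u|)) * |u| := by linarith
      _ ≤ 8 * C * lam * (1 + |u|) := by
        nlinarith [mul_nonneg hC (abs_nonneg u), mul_le_mul_of_nonneg_left hsmall hC]
  · have h2lam : |2 * lam| = 2 * lam := abs_of_nonneg (by positivity)
    have hshifted :
        ‖∫ t in (-lam)..lam, f (t - u)‖ ≤ C * (1 + (lam + |u|)) * (2 * lam) := by
      rw [intervalIntegral.integral_comp_sub_right]
      have := norm_intervalIntegral_le_of_norm_le_mul_one_add_abs hgrowth hsub_neg_lam hsub_lam
      rwa [show lam - u - (-lam - u) = 2 * lam by ring, h2lam] at this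
    have hcentered : ‖∫ t in (-lam)..lam, f t‖ ≤ C * (1 + (lam + |u|)) * (2 * lam) := by
      have := norm_intervalIntegral_le_of_norm_le_mul_one_add_abs hgrowth hneg_lam_abs hlam_abs
      rwa [show lam - -lam = 2 * lam by ring, h2lam] at this
    calc _ ≤ _ := norm_sub_le _ _
      _ ≤ 4 * C * lam * (1 + (lam + |u|)) := by linarith
      _ ≤ 8 * C * lam * (1 + |u|) := by
        nlinarith [mul_nonneg hC hlam, mul_le_mul_of_nonneg_left hlarge (mul_nonneg hC hlam)]

end IntervalIntegral

section Convolution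

variable {𝕜 : Type*} [RCLike 𝕜] {h f : ℝ → 𝕜} {C : ℝ}

theorem intervalIntegral_integral_mul_comp_sub (hh : Integrable h)
    (hmoment : Integrable fun u => ‖h u‖ * (1 + |u|)) (hf : Continuous f)
    (hgrowth : ∀ r, ‖f r‖ ≤ C * (1 + |r|)) {a b : ℝ} (hab : a ≤ b) :
    ∫ t in a..b, ∫ s, h (t - s) * f s = ∫ u, h u * ∫ t in a..b, f (t - u) := by
  have hC : 0 ≤ C := by simpa using (norm_nonneg _).trans (hgrowth 0)
  set M := max |a| |b|
  have hF : Integrable (Function.uncurry fun t u => h u * f (t - u))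
      ((volume.restrict (Ioc a b)).prod volume) := by
    refine Integrable.mono' ((hmoment.const_mul (C * (1 + M))).comp_snd _)
      (hh.aestronglyMeasurable.comp_snd.mul
        (hf.comp continuous_sub).aestronglyMeasurable) ?_
    rw [Measure.restrict_prod_eq_prod_univ]
    filter_upwards [ae_restrict_mem (measurableSet_Ioc.prod MeasurableSet.univ)]
      with ⟨t, u⟩ ⟨ht, _⟩
    have htM : |t| ≤ M := abs_le_max_abs_abs ht.1.le ht.2
    have hshift : 1 + |t - u| ≤ (1 + M) * (1 + |u|) := by
      nlinarith [abs_sub t u, mul_nonneg ((abs_nonneg t).trans htM) (abs_nonneg u)]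
    have : ‖f (t - u)‖ ≤ C * (1 + M) * (1 + |u|) :=
      (hgrowth _).trans (by rw [mul_assoc]; gcongr)
    calc ‖h u * f (t - u)‖ = ‖h u‖ * ‖f (t - u)‖ := norm_mul _ _
      _ ≤ ‖h u‖ * (C * (1 + M) * (1 + |u|)) := by gcongr
      _ = C * (1 + M) * (‖h u‖ * (1 + |u|)) := by ring
  simp_rw [intervalIntegral.integral_of_le hab]
  calc ∫ t in Ioc a b, ∫ s, h (t - s) * f s
      = ∫ t in Ioc a b, ∫ u, h u * f (t - u) := by
        congr 1 with t
        simpa only [sub_sub_cancel] using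
          (integral_sub_left_eq_self (fun u => h u * f (t - u)) volume t)
    _ = ∫ u, ∫ t in Ioc a b, h u * f (t - u) := integral_integral_swap hF
    _ = ∫ u, h u * ∫ t in Ioc a b, f (t - u) := by simp_rw [integral_const_mul]

theorem norm_intervalIntegral_integral_mul_comp_sub_sub_le (hh : Integrable h)
    (hh_one : ∫ u, h u = 1) (hmoment : Integrable fun u => ‖h u‖ * (1 + |u|))
    (hf : Continuous f) (hgrowth : ∀ r, ‖f r‖ ≤ C * (1 + |r|)) {lam : ℝ}
    (hlam : 0 ≤ lam) :
    ‖(∫ t in (-lam)..lam, ∫ s, h (t - s) * f s) - ∫ t in (-lam)..lam, f t‖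
      ≤ 8 * C * lam * ∫ u, ‖h u‖ * (1 + |u|) := by
  set P : ℝ → 𝕜 := fun u => ∫ t in (-lam)..lam, f (t - u)
  have hP0 : P 0 = ∫ t in (-lam)..lam, f t := by simp [P]
  have hbound (u : ℝ) : ‖h u * (P u - P 0)‖ ≤ 8 * C * lam * (‖h u‖ * (1 + |u|)) := by
    have := norm_intervalIntegral_comp_sub_sub_le hf hgrowth hlam u
    rw [← hP0] at this
    rw [norm_mul]
    calc ‖h u‖ * ‖P u - P 0‖ ≤ ‖h u‖ * (8 * C * lam * (1 + |u|)) := by gcongr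
      _ = _ := by ring
  have hP : Continuous P :=
    intervalIntegral.continuous_parametric_intervalIntegral_of_continuous'
      (f := fun u t => f (t - u)) (by fun_prop) _ _
  have hdiff : Integrable fun u => h u * (P u - P 0) :=
    (hmoment.const_mul _).mono'
      (hh.aestronglyMeasurable.mul (hP.sub continuous_const).aestronglyMeasurable)
      (ae_of_all _ hbound)
  have hidentity : (∫ t in (-lam)..lam, ∫ s, h (t - s) * f s) - ∫ t in (-lam)..lam, f t
      = ∫ u, h u * (P u - P 0) := by
    rw [intervalIntegral_integral_mul_comp_sub hh hmoment hf hgrowth (by linarith), ← hP0]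
    calc (∫ u, h u * P u) - P 0 = (∫ u, (h u * (P u - P 0) + h u * P 0)) - P 0 := by
          simp_rw [mul_sub, sub_add_cancel]
      _ = ∫ u, h u * (P u - P 0) := by
          rw [integral_add hdiff (hh.mul_const _), integral_mul_const, hh_one, one_mul,
            add_sub_cancel_right]
  rw [hidentity, ← integral_const_mul]
  exact norm_integral_le_of_norm_le (hmoment.const_mul _) (ae_of_all _ hbound)

end Convolution

theorem integrable_norm_mul_one_add_abs_of_norm_le_zpow {E : Type*} [NormedAddCommGroup E]
    {h : ℝ → E} (hh : AEStronglyMeasurable h) {C : ℝ} {n : ℤ} (hn : 2 < n)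
    (hdecay : ∀ t, ‖h t‖ ≤ C * (1 + |t|) ^ (-n)) :
    Integrable fun u => ‖h u‖ * (1 + |u|) := by
  have hg : Integrable fun u : ℝ => C * (1 + ‖u‖) ^ (-((n - 1 : ℤ) : ℝ)) :=
    (integrable_one_add_norm (by simp; exact_mod_cast (by omega : 1 < n - 1))).const_mul C
  refine hg.mono' (hh.norm.mul (by fun_prop)) (ae_of_all _ fun u => ?_)
  have hpos : 0 < 1 + |u| := by positivity
  rw [Real.norm_eq_abs, abs_of_nonneg (by positivity), Real.norm_eq_abs, ← Int.cast_neg,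
    Real.rpow_intCast]
  calc ‖h u‖ * (1 + |u|) ≤ C * (1 + |u|) ^ (-n) * (1 + |u|) := by gcongr; exact hdecay u
    _ = C * (1 + |u|) ^ (-(n - 1)) := by
      rw [mul_assoc, ← zpow_add_one₀ hpos.ne']; ring_nf

theorem smoothed_integral_asymptotics_general (h : ℝ → ℂ)
    (hint : (∫ t : ℝ, h t) = 1) (C₁ : ℝ)
    (hdecay : ∀ t : ℝ, ‖h t‖ ≤ C₁ * (1 + |t|) ^ (-3 : ℤ))
    (p : ℝ → ℝ) (hp : Continuous p) (C₂ : ℝ)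
    (hgrowth : ∀ r : ℝ, |p r| ≤ C₂ * (1 + |r|)) :
    ∃ C : ℝ, 0 < C ∧ ∀ lam : ℝ, 1 ≤ lam →
      ‖(∫ t in (-lam)..lam, ∫ s : ℝ, h (t - s) * (p s : ℂ))
        - ∫ s in (-lam)..lam, (p s : ℂ)‖ ≤ C * lam := by
  have hh : Integrable h := Integrable.of_integral_ne_zero (by rw [hint]; exact one_ne_zero)
  have hmoment := integrable_norm_mul_one_add_abs_of_norm_le_zpow hh.aestronglyMeasurable
    (by norm_num) hdecay
  set M := ∫ u, ‖h u‖ * (1 + |u|)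
  refine ⟨max (8 * C₂ * M) 1, lt_max_of_lt_right one_pos, fun lam hlam => ?_⟩
  calc _ ≤ 8 * C₂ * lam * M :=
        norm_intervalIntegral_integral_mul_comp_sub_sub_le hh hint hmoment
          (Complex.continuous_ofReal.comp hp) (fun r => by simpa using hgrowth r) (by linarith)
    _ = 8 * C₂ * M * lam := by ring
    _ ≤ max (8 * C₂ * M) 1 * lam := by gcongr; exact le_max_left _ _

/-- Smoothing against an integrable kernel of total integral one with cubic
decay changes `∫_{-λ}^{λ} p` by at most `O(λ)` for even `p` of linear growth. -/
theorem smoothed_integral_asymptotics (h : ℝ → ℂ) (hmeas : Measurable h)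
    (hint : (∫ t : ℝ, h t) = 1) (C₁ : ℝ)
    (hdecay : ∀ t : ℝ, ‖h t‖ ≤ C₁ * (1 + |t|) ^ (-3 : ℤ))
    (p : ℝ → ℝ) (hp : Continuous p) (heven : ∀ r : ℝ, p (-r) = p r) (C₂ : ℝ)
    (hgrowth : ∀ r : ℝ, |p r| ≤ C₂ * (1 + |r|)) :
    ∃ C : ℝ, 0 < C ∧ ∀ lam : ℝ, 1 ≤ lam →
      ‖(∫ t in (-lam)..lam, ∫ s : ℝ, h (t - s) * (p s : ℂ))
        - ∫ s in (-lam)..lam, (p s : ℂ)‖ ≤ C * lam :=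
  smoothed_integral_asymptotics_general h hint C₁ hdecay p hp C₂ hgrowth
end

section
/- Let h : ℝ → ℂ be a Schwartz function. Then for every N ∈ ℕ there exists C_N > 0 such that for all t ∈ ℝ with |t| ≥ 1, | ∫_ℝ h(t − r) · r·tanh(πr) dr − ( |t| ∫_ℝ h(r) dr − sign(t) ∫_ℝ h(r)·r dr ) | ≤ C_N (1 + |t|)^{−N}. -/
/-!
After the substitution `s ↦ t - s` the convolution is `∫ h(s) ρ(t - s) ds` with
`ρ(x) = x tanh(πx)`, and the main term is `∫ h(s) sign(t) (t - s) ds`. Since `tanh` is odd,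
`ρ(x) = |x| - |x| (1 - tanh(π|x|))`, so the error integrand splits into two pieces:
`h(s) |t - s| (1 - tanh(π|t - s|))`, whose kernel decays like `|x| e^{-2π|x|}`, and
`h(s) (|t - s| - sign(t) (t - s))`, which vanishes unless `|s| ≥ |t|`. With Peetre's inequality
`1 + |t| ≤ (1 + |s|)(1 + |t - s|)` and the decay of `h`, the error integrand is at most
`C (1 + |t|)^{-N} ((1 + (t - s)^2)^{-1} + (1 + s^2)^{-1})`, whose integral is `2πC (1 + |t|)^{-N}`.
-/

open Real MeasureTheory
open scoped Nat SchwartzMap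

@[fun_prop]
lemma Real.continuous_tanh : Continuous tanh := by
  rw [show tanh = fun x => sinh x / cosh x from funext tanh_eq_sinh_div_cosh]
  exact continuous_sinh.div continuous_cosh fun x => (cosh_pos x).ne'

lemma Real.one_sub_tanh_le (x : ℝ) : 1 - tanh x ≤ 2 * exp (-(2 * x)) := by
  have hsum : 0 < exp x + exp (-x) := by positivity
  have hprod : exp x * exp (-x) = 1 := by rw [← exp_add, add_neg_cancel, exp_zero]
  have hsq : exp (-(2 * x)) = exp (-x) ^ 2 := by rw [← exp_nat_mul]; ring_nf
  rw [tanh_eq, hsq, one_sub_div hsum.ne', div_le_iff₀ hsum]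
  nlinarith [exp_pos (-x)]

lemma Real.mul_tanh_mul_eq_abs_mul (c x : ℝ) : x * tanh (c * x) = |x| * tanh (c * |x|) := by
  rcases abs_cases x with ⟨hx, -⟩ | ⟨hx, -⟩ <;> rw [hx]
  rw [mul_neg, tanh_neg]; ring

lemma one_add_pow_mul_exp_neg_le (M : ℕ) {u : ℝ} (hu : 0 ≤ u) :
    (1 + u) ^ M * exp (-u) ≤ M ! * exp 1 := by
  have h := pow_div_factorial_le_exp (x := 1 + u) (by linarith) M
  rw [div_le_iff₀ (by positivity), exp_add] at h
  rw [exp_neg, mul_inv_le_iff₀ (exp_pos u)]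
  linarith

lemma exists_one_add_abs_pow_mul_one_sub_tanh_le (M : ℕ) :
    ∃ B, ∀ y : ℝ, (1 + |y|) ^ M * (|y| * (1 - tanh (π * |y|))) ≤ B := by
  refine ⟨2 * ((M + 1) ! * exp 1), fun y => ?_⟩
  have hexp : exp (-(2 * (π * |y|))) ≤ exp (-|y|) := by
    gcongr; nlinarith [pi_gt_three, abs_nonneg y]
  calc (1 + |y|) ^ M * (|y| * (1 - tanh (π * |y|)))
      ≤ (1 + |y|) ^ M * ((1 + |y|) * (2 * exp (-|y|))) := by
        gcongr
        · linarith [tanh_lt_one (π * |y|)]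
        · linarith
        · exact (one_sub_tanh_le _).trans (by linarith)
    _ = 2 * ((1 + |y|) ^ (M + 1) * exp (-|y|)) := by ring
    _ ≤ 2 * ((M + 1) ! * exp 1) := by
        gcongr 2 * ?_; exact one_add_pow_mul_exp_neg_le (M + 1) (abs_nonneg y)

lemma Real.abs_sign_le_one (t : ℝ) : |sign t| ≤ 1 := by
  rcases sign_apply_eq t with h | h | h <;> simp [h]

lemma Real.abs_sign_mul_le (t y : ℝ) : |sign t * y| ≤ |y| := by
  rw [abs_mul]; exact mul_le_of_le_one_left (abs_nonneg y) (abs_sign_le_one t)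

lemma Real.sign_mul_sub_eq_abs_sub {t s : ℝ} (h : |s| ≤ |t|) : sign t * (t - s) = |t - s| := by
  rcases lt_trichotomy t 0 with ht | rfl | ht
  · have := (abs_le.mp (h.trans_eq (abs_of_neg ht))).1
    rw [sign_of_neg ht, abs_of_nonpos (by linarith : t - s ≤ 0)]; ring
  · simp [abs_nonpos_iff.mp (h.trans_eq abs_zero)]
  · have := (abs_le.mp (h.trans_eq (abs_of_pos ht))).2
    rw [sign_of_pos ht, abs_of_nonneg (by linarith : 0 ≤ t - s)]; ring

lemma Real.sign_mul_self_eq_abs (t : ℝ) : sign t * t = |t| := by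
  simpa using sign_mul_sub_eq_abs_sub (s := 0) (by simp)

lemma one_add_abs_pow_mul_abs_sub_sub_sign_mul_le (N : ℕ) (t s : ℝ) :
    (1 + |t|) ^ N * (|t - s| - sign t * (t - s)) ≤ 4 * (1 + |s|) ^ (N + 1) := by
  rcases lt_or_ge |s| |t| with hst | hts
  · rw [sign_mul_sub_eq_abs_sub hst.le, sub_self, mul_zero]; positivity
  · calc (1 + |t|) ^ N * (|t - s| - sign t * (t - s))
        ≤ (1 + |s|) ^ N * (4 * (1 + |s|)) := by
          gcongr
          · linarith [le_abs_self (sign t * (t - s)), abs_sign_mul_le t (t - s)]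
          · linarith [neg_abs_le (sign t * (t - s)), abs_sign_mul_le t (t - s), abs_sub t s]
      _ = 4 * (1 + |s|) ^ (N + 1) := by ring

lemma one_add_abs_le_mul_one_add_abs_sub (t s : ℝ) : 1 + |t| ≤ (1 + |s|) * (1 + |t - s|) := by
  have : |t| ≤ |s| + |t - s| := by simpa using abs_add_le s (t - s)
  nlinarith [abs_nonneg s, abs_nonneg (t - s)]

lemma le_mul_inv_one_add_sq {x a B : ℝ} (ha : 0 ≤ a) (h : (1 + |x|) ^ 2 * a ≤ B) :
    a ≤ B * (1 + x ^ 2)⁻¹ := by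
  rw [← div_eq_mul_inv, le_div_iff₀ (by positivity)]
  nlinarith [sq_abs x, abs_nonneg x]

lemma one_add_abs_pow_mul_mul_le {N : ℕ} {t s a b A B : ℝ} (ha : 0 ≤ a) (hb : 0 ≤ b)
    (hA : (1 + |s|) ^ N * a ≤ A) (hB : (1 + |t - s|) ^ (N + 2) * b ≤ B) :
    (1 + |t|) ^ N * (a * b) ≤ A * (B * (1 + (t - s) ^ 2)⁻¹) := by
  have hb' : (1 + |t - s|) ^ N * b ≤ B * (1 + (t - s) ^ 2)⁻¹ :=
    le_mul_inv_one_add_sq (by positivity) (by rwa [← mul_assoc, ← pow_add, add_comm 2])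
  calc (1 + |t|) ^ N * (a * b)
      ≤ ((1 + |s|) * (1 + |t - s|)) ^ N * (a * b) := by
        gcongr; exact one_add_abs_le_mul_one_add_abs_sub t s
    _ = ((1 + |s|) ^ N * a) * ((1 + |t - s|) ^ N * b) := by rw [mul_pow]; ring
    _ ≤ A * (B * (1 + (t - s) ^ 2)⁻¹) :=
        mul_le_mul hA hb' (by positivity) ((by positivity : (0:ℝ) ≤ _).trans hA)

lemma one_add_abs_pow_mul_mul_abs_sub_sub_sign_mul_le {N : ℕ} {t s a A : ℝ} (ha : 0 ≤ a)
    (hA : (1 + |s|) ^ (N + 3) * a ≤ A) :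
    (1 + |t|) ^ N * (a * (|t - s| - sign t * (t - s))) ≤ 4 * (A * (1 + s ^ 2)⁻¹) := by
  have hdecay : (1 + |s|) ^ (N + 1) * a ≤ A * (1 + s ^ 2)⁻¹ :=
    le_mul_inv_one_add_sq (by positivity) (by rwa [← mul_assoc, ← pow_add, add_comm 2])
  calc (1 + |t|) ^ N * (a * (|t - s| - sign t * (t - s)))
      = a * ((1 + |t|) ^ N * (|t - s| - sign t * (t - s))) := by ring
    _ ≤ a * (4 * (1 + |s|) ^ (N + 1)) := by
        gcongr a * ?_; exact one_add_abs_pow_mul_abs_sub_sub_sign_mul_le N t s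
    _ = 4 * ((1 + |s|) ^ (N + 1) * a) := by ring
    _ ≤ 4 * (A * (1 + s ^ 2)⁻¹) := by gcongr

lemma SchwartzMap.exists_one_add_norm_pow_mul_le {E F : Type*} [NormedAddCommGroup E]
    [NormedSpace ℝ E] [NormedAddCommGroup F] [NormedSpace ℝ F] (h : 𝓢(E, F)) (M : ℕ) :
    ∃ A, ∀ x, (1 + ‖x‖) ^ M * ‖h x‖ ≤ A :=
  ⟨_, fun x => by
    simpa using h.one_add_le_sup_seminorm_apply (𝕜 := ℝ) (m := (M, 0)) le_rfl le_rfl x⟩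

lemma SchwartzMap.exists_one_add_abs_pow_mul_norm_mul_tanh_error_le (h : 𝓢(ℝ, ℂ)) (N : ℕ) :
    ∃ C, 0 < C ∧ ∀ t s : ℝ, (1 + |t|) ^ N *
      ‖h s * (((t - s) * tanh (π * (t - s)) - sign t * (t - s) : ℝ) : ℂ)‖ ≤
        C * ((1 + (t - s) ^ 2)⁻¹ + (1 + s ^ 2)⁻¹) := by
  obtain ⟨A, hA⟩ := h.exists_one_add_norm_pow_mul_le (N + 3)
  obtain ⟨B, hB⟩ := exists_one_add_abs_pow_mul_one_sub_tanh_le (N + 2)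
  have hA0 : 0 ≤ A := (hA 0).trans' (by positivity)
  have hB0 : 0 ≤ B := (hB 0).trans' (by simp)
  refine ⟨A * B + 4 * A + 1, by positivity, fun t s => ?_⟩
  simp only [Real.norm_eq_abs] at hA
  set y := t - s
  set a := ‖h s‖
  have hcorr : 0 ≤ |y| * (1 - tanh (π * |y|)) :=
    mul_nonneg (abs_nonneg y) (by linarith [tanh_lt_one (π * |y|)])
  have htail : 0 ≤ |y| - sign t * y := by linarith [le_abs_self (sign t * y), abs_sign_mul_le t y]
  have hAN : (1 + |s|) ^ N * a ≤ A := (hA s).trans' <| mul_le_mul_of_nonneg_right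
    (pow_le_pow_right₀ (by linarith [abs_nonneg s]) (by omega)) (norm_nonneg _)
  have hsmooth := one_add_abs_pow_mul_mul_le (t := t) (norm_nonneg _) hcorr hAN (hB y)
  have hrough := one_add_abs_pow_mul_mul_abs_sub_sub_sign_mul_le (t := t) (norm_nonneg _) (hA s)
  have hsplit :
      y * tanh (π * y) - sign t * y = (|y| - sign t * y) - |y| * (1 - tanh (π * |y|)) := by
    rw [mul_tanh_mul_eq_abs_mul]; ring
  have hw₁ : 0 ≤ (1 + y ^ 2)⁻¹ := by positivity
  have hw₂ : 0 ≤ (1 + s ^ 2)⁻¹ := by positivity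
  rw [norm_mul, Complex.norm_real, Real.norm_eq_abs, hsplit]
  calc (1 + |t|) ^ N * (a * |(|y| - sign t * y) - |y| * (1 - tanh (π * |y|))|)
      ≤ (1 + |t|) ^ N * (a * ((|y| - sign t * y) + |y| * (1 - tanh (π * |y|)))) := by
        gcongr
        exact (abs_sub _ _).trans_eq (by rw [abs_of_nonneg htail, abs_of_nonneg hcorr])
    _ = (1 + |t|) ^ N * (a * (|y| - sign t * y)) +
          (1 + |t|) ^ N * (a * (|y| * (1 - tanh (π * |y|)))) := by ring
    _ ≤ 4 * (A * (1 + s ^ 2)⁻¹) + A * (B * (1 + y ^ 2)⁻¹) := add_le_add hrough hsmooth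
    _ ≤ (A * B + 4 * A + 1) * ((1 + y ^ 2)⁻¹ + (1 + s ^ 2)⁻¹) := by
        nlinarith [mul_nonneg (mul_nonneg hA0 hB0) hw₂, mul_nonneg hA0 hw₁]

lemma SchwartzMap.integrable_mul_ofReal_of_abs_le (h : 𝓢(ℝ, ℂ)) {g : ℝ → ℝ} (hg : Continuous g)
    {a : ℝ} (hga : ∀ s, |g s| ≤ a + |s|) : Integrable fun s => h s * (g s : ℂ) := by
  refine ((h.integrable.norm.const_mul a).add (h.integrable_pow_mul volume 1)).mono'
    (h.continuous.mul (Complex.continuous_ofReal.comp hg)).aestronglyMeasurable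
    (Filter.Eventually.of_forall fun s => ?_)
  simp only [Pi.add_apply, pow_one, norm_mul, Complex.norm_real, Real.norm_eq_abs]
  nlinarith [hga s, norm_nonneg (h s)]

lemma SchwartzMap.integral_mul_tanh_sub_expansion_eq (h : 𝓢(ℝ, ℂ)) (t : ℝ) :
    (∫ s : ℝ, h (t - s) * ((s * tanh (π * s) : ℝ) : ℂ))
        - (((|t| : ℝ) : ℂ) * (∫ s : ℝ, h s) - ((sign t : ℝ) : ℂ) * ∫ s : ℝ, h s * (s : ℂ)) =
      ∫ s : ℝ, h s * (((t - s) * tanh (π * (t - s)) - sign t * (t - s) : ℝ) : ℂ) := by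
  have hconv : (∫ s : ℝ, h (t - s) * ((s * tanh (π * s) : ℝ) : ℂ)) =
      ∫ s : ℝ, h s * (((t - s) * tanh (π * (t - s)) : ℝ) : ℂ) := by
    simpa only [sub_sub_cancel] using integral_sub_left_eq_self
      (fun s : ℝ => h s * (((t - s) * tanh (π * (t - s)) : ℝ) : ℂ)) volume t
  have hmain : ((|t| : ℝ) : ℂ) * (∫ s : ℝ, h s) - ((sign t : ℝ) : ℂ) * ∫ s : ℝ, h s * (s : ℂ) =
      ∫ s : ℝ, h s * ((sign t * (t - s) : ℝ) : ℂ) := by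
    have hmoment : Integrable fun s : ℝ => h s * (s : ℂ) :=
      h.integrable_mul_ofReal_of_abs_le continuous_id (a := 0) (by simp)
    rw [← sign_mul_self_eq_abs, ← integral_const_mul, ← integral_const_mul,
      ← integral_sub (h.integrable.const_mul _) (hmoment.const_mul _)]
    congr 1 with s; push_cast; ring
  have hlin : ∀ {c : ℝ}, |c| ≤ 1 → ∀ s, |c * (t - s)| ≤ |t| + |s| := fun hc s =>
    (abs_mul _ _).trans_le (mul_le_of_le_one_left (abs_nonneg _) hc) |>.trans (abs_sub t s)
  rw [hconv, hmain, ← integral_sub]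
  · congr 1 with s; push_cast; ring
  · refine h.integrable_mul_ofReal_of_abs_le (a := |t|) (by fun_prop) fun s => ?_
    rw [mul_comm]
    exact hlin (abs_le.2 ⟨(neg_one_lt_tanh _).le, (tanh_lt_one _).le⟩) s
  · exact h.integrable_mul_ofReal_of_abs_le (a := |t|) (by fun_prop) (hlin (abs_sign_le_one t))

lemma integral_inv_one_add_sq_sub (t : ℝ) : ∫ s : ℝ, (1 + (t - s) ^ 2)⁻¹ = π := by
  rw [integral_sub_left_eq_self (fun x : ℝ => (1 + x ^ 2)⁻¹), integral_univ_inv_one_add_sq]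

/-- Asymptotic expansion, with rapidly decreasing error, of the convolution of
a Schwartz function with the Plancherel density `r tanh(π r)`. -/
theorem plancherel_convolution_expansion (h : SchwartzMap ℝ ℂ) :
    ∀ N : ℕ, ∃ C : ℝ, 0 < C ∧ ∀ t : ℝ, 1 ≤ |t| →
      ‖(∫ s : ℝ, h (t - s) * ((s * Real.tanh (π * s) : ℝ) : ℂ))
        - (((|t| : ℝ) : ℂ) * (∫ s : ℝ, h s)
            - ((Real.sign t : ℝ) : ℂ) * ∫ s : ℝ, h s * (s : ℂ))‖
        ≤ C * (1 + |t|) ^ (-(N : ℤ)) := by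
  intro N
  obtain ⟨C, hC, hbound⟩ := h.exists_one_add_abs_pow_mul_norm_mul_tanh_error_le N
  refine ⟨2 * π * C, by positivity, fun t _ => ?_⟩
  have hI : Integrable fun s : ℝ => (1 + (t - s) ^ 2)⁻¹ :=
    integrable_inv_one_add_sq.comp_sub_left t
  rw [h.integral_mul_tanh_sub_expansion_eq, zpow_neg, zpow_natCast]
  calc _ ≤ ∫ s : ℝ, ((1 + |t|) ^ N)⁻¹ * (C * ((1 + (t - s) ^ 2)⁻¹ + (1 + s ^ 2)⁻¹)) :=
        norm_integral_le_of_norm_le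
          ((hI.add integrable_inv_one_add_sq).const_mul _ |>.const_mul _)
          (Filter.Eventually.of_forall fun s => by
            rw [le_inv_mul_iff₀ (by positivity)]; exact hbound t s)
    _ = 2 * π * C * ((1 + |t|) ^ N)⁻¹ := by
        rw [integral_const_mul, integral_const_mul, integral_add hI integrable_inv_one_add_sq,
          integral_inv_one_add_sq_sub, integral_univ_inv_one_add_sq]
        ring
end

section
/- Let (r_j)_{j∈ℤ} be a sequence of real numbers with r_{−j} = −r_j for all j, let A > 0 and ε > 0, and assume the trace identity hypothesis: for every smooth compactly supported function g : ℝ → ℂ with support contained in (−ε, ε), setting h(ξ) = ∫_ℝ g(u) e^{−iuξ} du, the family (h(t − r_j))_{j∈ℤ} is absolutely summable for every t ∈ ℝ and Σ_{j∈ℤ} h(t − r_j) = (A/(2π)) ∫_ℝ h(t − r) · r·tanh(πr) dr. Let g : ℝ → ℂ be smooth with support in (−ε, ε) and h(ξ) = ∫_ℝ g(u) e^{−iuξ} du satisfying ∫_ℝ h(t) dt = 1. Then there exists C > 0 such that for all λ ≥ 1, | ∫_{−λ}^{λ} Σ_{j∈ℤ} h(t − r_j) dt − (A/(2π)) λ²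 | ≤ Cλ. -/
open Real MeasureTheory Complex FourierTransform

lemma aux_hasDerivAt_tanh (x : ℝ) : HasDerivAt Real.tanh ((Real.cosh x ^ 2)⁻¹) x := by
  have hc := Real.hasDerivAt_cosh x
  have hs := Real.hasDerivAt_sinh x
  have hne : Real.cosh x ≠ 0 := (Real.cosh_pos x).ne'
  have hd := hs.div hc hne
  have heq : (Real.cosh x * Real.cosh x - Real.sinh x * Real.sinh x) / Real.cosh x ^ 2
      = (Real.cosh x ^ 2)⁻¹ := by
    have := Real.cosh_sq_sub_sinh_sq x
    field_simp
    nlinarith [this]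
  rw [heq] at hd
  exact hd.congr_of_eventuallyEq (by filter_upwards with y; rw [Real.tanh_eq_sinh_div_cosh]; rfl)

lemma aux_abs_tanh_le (x : ℝ) : |Real.tanh x| ≤ 1 := by
  rw [Real.tanh_eq_sinh_div_cosh, abs_div, _root_.abs_of_pos (Real.cosh_pos x),
    div_le_one (Real.cosh_pos x)]
  nlinarith [Real.cosh_sq_sub_sinh_sq x, abs_nonneg (Real.sinh x), _root_.sq_abs (Real.sinh x),
    Real.cosh_pos x, sq_nonneg (|Real.sinh x| - Real.cosh x)]

lemma aux_abs_le_cosh (x : ℝ) : |x| ≤ Real.cosh x := by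
  have key : ∀ y : ℝ, 0 ≤ y → y ≤ Real.cosh y := by
    intro y hy
    have h1 : y ≤ Real.sinh y := Real.self_le_sinh_iff.2 hy
    have h2 : Real.sinh y ≤ Real.cosh y := by
      nlinarith [Real.cosh_sub_sinh y, Real.exp_pos (-y)]
    linarith
  rcases le_or_gt 0 x with hx | hx
  · rw [_root_.abs_of_nonneg hx]; exact key x hx
  · rw [_root_.abs_of_neg hx, ← Real.cosh_neg]; exact key (-x) (by linarith)

lemma aux_abs_le_cosh_sq (x : ℝ) : |x| ≤ Real.cosh x ^ 2 := by
  nlinarith [Real.one_le_cosh x, aux_abs_le_cosh x, abs_nonneg x]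

lemma aux_one_sub_tanh_sq (x : ℝ) : 1 - Real.tanh x ^ 2 = (Real.cosh x ^ 2)⁻¹ := by
  have hne : Real.cosh x ≠ 0 := (Real.cosh_pos x).ne'
  rw [Real.tanh_eq_sinh_div_cosh]
  field_simp
  linarith [Real.cosh_sq_sub_sinh_sq x]

lemma aux_lipschitz : LipschitzWith 2 (fun x : ℝ => x * Real.tanh (π * x)) := by
  have hder : ∀ x : ℝ, HasDerivAt (fun x : ℝ => x * Real.tanh (π * x))
      (Real.tanh (π * x) + x * ((Real.cosh (π * x) ^ 2)⁻¹ * π)) x := by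
    intro x
    have h0 : HasDerivAt (fun y : ℝ => π * y) π x := by
      simpa using (hasDerivAt_id x).const_mul π
    have h1 : HasDerivAt (fun y : ℝ => Real.tanh (π * y)) ((Real.cosh (π * x) ^ 2)⁻¹ * π) x :=
      (aux_hasDerivAt_tanh (π * x)).comp x h0
    simpa [Pi.mul_def] using (hasDerivAt_id x).mul h1
  apply lipschitzWith_of_nnnorm_deriv_le (fun x => (hder x).differentiableAt)
  intro x
  rw [(hder x).deriv]
  have h1 : |Real.tanh (π * x)| ≤ 1 := aux_abs_tanh_le _
  have h5 : (0:ℝ) < Real.cosh (π * x) ^ 2 := by positivity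
  have h2 : |x * ((Real.cosh (π * x) ^ 2)⁻¹ * π)| ≤ 1 := by
    have h3 : |π * x| ≤ Real.cosh (π * x) ^ 2 := aux_abs_le_cosh_sq _
    rw [abs_mul, _root_.abs_of_pos Real.pi_pos] at h3
    have h4 := mul_le_mul_of_nonneg_right h3 (inv_nonneg.2 h5.le)
    rw [mul_inv_cancel₀ h5.ne'] at h4
    rw [abs_mul, abs_mul, _root_.abs_of_pos (inv_pos.2 h5), _root_.abs_of_pos Real.pi_pos]
    nlinarith [h4]
  have hb : ‖Real.tanh (π * x) + x * ((Real.cosh (π * x) ^ 2)⁻¹ * π)‖ ≤ 2 := by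
    have := norm_add_le (Real.tanh (π * x)) (x * ((Real.cosh (π * x) ^ 2)⁻¹ * π))
    simp only [Real.norm_eq_abs] at this ⊢
    linarith
  exact_mod_cast hb

lemma aux_psi_close (t : ℝ) : _root_.abs (t * Real.tanh (π * t) - |t|) ≤ 1 := by
  have key : ∀ s : ℝ, 0 ≤ s → |s * Real.tanh (π * s) - s| ≤ 1 := by
    intro s hs
    have htle : Real.tanh (π * s) ≤ 1 := (abs_le.1 (aux_abs_tanh_le _)).2
    have htnn : 0 ≤ Real.tanh (π * s) := by
      rw [Real.tanh_eq_sinh_div_cosh]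
      exact div_nonneg (Real.sinh_nonneg_iff.2 (by positivity)) (Real.cosh_pos _).le
    have h1 : s * Real.tanh (π * s) - s = -(s * (1 - Real.tanh (π * s))) := by ring
    rw [h1, abs_neg, _root_.abs_of_nonneg (by nlinarith)]
    have h3 := aux_one_sub_tanh_sq (π * s)
    have h4 : |π * s| ≤ Real.cosh (π * s) ^ 2 := aux_abs_le_cosh_sq _
    rw [_root_.abs_of_nonneg (by positivity)] at h4
    have h5 : (0:ℝ) < Real.cosh (π * s) ^ 2 := by positivity
    have h6 : π * (s * (Real.cosh (π * s) ^ 2)⁻¹) ≤ 1 := by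
      have h7 := mul_le_mul_of_nonneg_right h4 (inv_nonneg.2 h5.le)
      rw [mul_inv_cancel₀ h5.ne'] at h7
      nlinarith [h7]
    have h8 : s * (1 - Real.tanh (π * s)) ≤ s * (1 - Real.tanh (π * s) ^ 2) := by nlinarith [mul_nonneg (mul_nonneg hs htnn) (sub_nonneg.2 htle)]
    rw [h3] at h8
    nlinarith [Real.pi_gt_three, h6, mul_nonneg hs (inv_nonneg.2 h5.le)]
  rcases le_or_gt 0 t with ht | ht
  · rw [_root_.abs_of_nonneg ht]; exact key t ht
  · have hthis := key (-t) (by linarith)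
    rw [_root_.abs_of_neg ht]
    have heq : -t * Real.tanh (π * -t) = t * Real.tanh (π * t) := by
      rw [mul_neg, Real.tanh_neg]; ring
    rw [heq] at hthis
    exact hthis

lemma aux_decay (g : ℝ → ℂ) (hg : ContDiff ℝ (⊤ : ℕ∞) g) (hgsupp : HasCompactSupport g)
    (h : ℝ → ℂ)
    (hdef : ∀ ξ : ℝ, h ξ = ∫ u : ℝ, g u * Complex.exp (-Complex.I * u * ξ)) :
    Continuous h ∧ ∃ C : ℝ, 0 < C ∧ ∀ ξ : ℝ, ‖h ξ‖ * (1 + |ξ|) ^ 3 ≤ C := by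
  -- `g` as a Schwartz map
  let gS : SchwartzMap ℝ ℂ :=
    { toFun := g
      smooth' := hg.of_le (by simp)
      decay' := by
        intro k n
        have hc : Continuous fun x : ℝ => ‖x‖ ^ k * ‖iteratedFDeriv ℝ n g x‖ :=
          ((continuous_norm.pow k)).mul ((hg.continuous_iteratedFDeriv (by exact_mod_cast le_top)).norm)
        have hcs : HasCompactSupport fun x : ℝ => ‖x‖ ^ k * ‖iteratedFDeriv ℝ n g x‖ :=
          HasCompactSupport.mul_left ((hgsupp.iteratedFDeriv n).norm)
        obtain ⟨C, hC⟩ := hc.bounded_above_of_compact_support hcs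
        exact ⟨C, fun x => (le_abs_self _).trans (hC x)⟩ }
  -- relate h to the Fourier transform of gS
  have hrel : ∀ ξ : ℝ, h ξ = 𝓕 (⇑gS) (ξ / (2 * π)) := by
    intro ξ
    rw [hdef, Real.fourier_real_eq_integral_exp_smul]
    congr 1
    ext u
    rw [smul_eq_mul, mul_comm]
    congr 1
    push_cast
    have hπ : (π : ℂ) ≠ 0 := Complex.ofReal_ne_zero.2 Real.pi_ne_zero
    field_simp
  set fS : SchwartzMap ℝ ℂ := SchwartzMap.fourierTransformCLM ℝ gS with hfS
  have hrel2 : ∀ ξ : ℝ, h ξ = fS (ξ / (2 * π)) := by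
    intro ξ; rw [hrel ξ]; rfl
  constructor
  · have : Continuous fun ξ : ℝ => fS (ξ / (2 * π)) :=
      fS.continuous.comp (continuous_id.div_const _)
    exact this.congr (fun ξ => (hrel2 ξ).symm)
  · obtain ⟨C0, hC0pos, hC0⟩ := fS.decay 0 0
    obtain ⟨C3, hC3pos, hC3⟩ := fS.decay 3 0
    simp only [pow_zero, one_mul, norm_iteratedFDeriv_zero] at hC0 hC3
    have key : ∀ y : ℝ, ‖fS y‖ * (1 + |y|) ^ 3 ≤ 8 * (C0 + C3) := by
      intro y
      have hB0 : ‖fS y‖ ≤ C0 := hC0 y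
      have hB3 : |y| ^ 3 * ‖fS y‖ ≤ C3 := by simpa [Real.norm_eq_abs] using hC3 y
      have ha : (0:ℝ) ≤ |y| := abs_nonneg y
      have hBnn : (0:ℝ) ≤ ‖fS y‖ := norm_nonneg _
      have h1 : |y| * ‖fS y‖ ≤ C0 + C3 := by
        rcases le_or_gt (|y|) 1 with hy | hy
        · nlinarith
        · nlinarith [pow_le_pow_right₀ hy.le (by norm_num : 1 ≤ 3)]
      have h2 : |y| ^ 2 * ‖fS y‖ ≤ C0 + C3 := by
        rcases le_or_gt (|y|) 1 with hy | hy
        · nlinarith [sq_nonneg (1 - |y|)]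
        · nlinarith [pow_le_pow_right₀ hy.le (by norm_num : 2 ≤ 3)]
      nlinarith
    refine ⟨(2 * π) ^ 3 * (8 * (C0 + C3)), by positivity, fun ξ => ?_⟩
    rw [hrel2 ξ]
    set y := ξ / (2 * π) with hy
    have h2π : (0:ℝ) < 2 * π := by positivity
    have habs : |ξ| = 2 * π * |y| := by
      rw [hy, abs_div, _root_.abs_of_pos h2π]
      field_simp
    have hle : (1 + |ξ|) ^ 3 ≤ (2 * π) ^ 3 * (1 + |y|) ^ 3 := by
      rw [← mul_pow]
      apply pow_le_pow_left₀ (by positivity)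
      rw [habs]
      nlinarith [Real.pi_gt_three, abs_nonneg y]
    calc ‖fS y‖ * (1 + |ξ|) ^ 3 ≤ ‖fS y‖ * ((2 * π) ^ 3 * (1 + |y|) ^ 3) :=
          mul_le_mul_of_nonneg_left hle (norm_nonneg _)
      _ = (2 * π) ^ 3 * (‖fS y‖ * (1 + |y|) ^ 3) := by ring
      _ ≤ (2 * π) ^ 3 * (8 * (C0 + C3)) :=
          mul_le_mul_of_nonneg_left (key y) (by positivity)


/-- Under the trace identity hypothesis, the integral of the spectral side
against a fixed admissible test function `h` of total integral one satisfies
`∫_{-λ}^{λ} Σ_j h(t - r_j) dt = (A/(2π)) λ² + O(λ)`. -/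
theorem integrated_trace_asymptotics (r : ℤ → ℝ) (hsym : ∀ j : ℤ, r (-j) = - r j)
    (A ε : ℝ) (hA : 0 < A) (hε : 0 < ε)
    (trace : ∀ g : ℝ → ℂ, ContDiff ℝ (⊤ : ℕ∞) g → HasCompactSupport g →
      Function.support g ⊆ Set.Ioo (-ε) ε →
      ∀ t : ℝ,
        Summable (fun j : ℤ =>
          ‖∫ u : ℝ, g u * Complex.exp (-Complex.I * u * (t - r j))‖) ∧
        (∑' j : ℤ, ∫ u : ℝ, g u * Complex.exp (-Complex.I * u * (t - r j)))
          = (A / (2 * π)) *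
            ∫ s : ℝ, (∫ u : ℝ, g u * Complex.exp (-Complex.I * u * (t - s)))
              * ((s * Real.tanh (π * s) : ℝ) : ℂ))
    (g : ℝ → ℂ) (hg : ContDiff ℝ (⊤ : ℕ∞) g) (hgsupp : HasCompactSupport g)
    (hgsub : Function.support g ⊆ Set.Ioo (-ε) ε)
    (h : ℝ → ℂ)
    (hdef : ∀ ξ : ℝ, h ξ = ∫ u : ℝ, g u * Complex.exp (-Complex.I * u * ξ))
    (hint : (∫ t : ℝ, h t) = 1) :
    ∃ C : ℝ, 0 < C ∧ ∀ lam : ℝ, 1 ≤ lam →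
      ‖(∫ t in (-lam)..lam, ∑' j : ℤ, h (t - r j))
        - (A / (2 * π)) * (lam : ℂ) ^ 2‖ ≤ C * lam := by
  obtain ⟨hcont, Ch, hChpos, hCh⟩ := aux_decay g hg hgsupp h hdef
  -- the convenient bound function
  set bnd : ℝ → ℝ := fun x => Ch * (1 + x ^ 2)⁻¹ with hbnd_def
  have hbnd_nonneg : ∀ x, 0 ≤ bnd x := fun x => by positivity
  have hCh' : ∀ ξ : ℝ, ‖h ξ‖ * (1 + |ξ|) ≤ bnd ξ := by
    intro ξ
    have h0 := hCh ξ
    have h1 : (1:ℝ) + ξ ^ 2 ≤ (1 + |ξ|) ^ 2 := by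
      nlinarith [abs_nonneg ξ, _root_.sq_abs ξ]
    have hpos : (0:ℝ) < 1 + ξ ^ 2 := by positivity
    have hb : bnd ξ = Ch / (1 + ξ ^ 2) := by
      show Ch * (1 + ξ ^ 2)⁻¹ = Ch / (1 + ξ ^ 2)
      ring
    rw [hb, le_div_iff₀ hpos]
    nlinarith [norm_nonneg (h ξ), abs_nonneg ξ,
      mul_le_mul_of_nonneg_left h1 (mul_nonneg (norm_nonneg (h ξ)) (by positivity : (0:ℝ) ≤ 1 + |ξ|))]
  have hh_le_bnd : ∀ ξ : ℝ, ‖h ξ‖ ≤ bnd ξ := by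
    intro ξ
    have := hCh' ξ
    nlinarith [norm_nonneg (h ξ), abs_nonneg ξ]
  have hbnd_int : Integrable bnd := integrable_inv_one_add_sq.const_mul Ch
  have hbnd_int_t : ∀ t : ℝ, Integrable (fun s => bnd (t - s)) := fun t => hbnd_int.comp_sub_left t
  have hh_int : Integrable h := hbnd_int.mono' hcont.aestronglyMeasurable
    (Filter.Eventually.of_forall hh_le_bnd)
  have hh_int_t : ∀ t : ℝ, Integrable (fun s => h (t - s)) := fun t => hh_int.comp_sub_left t
  -- the weight function
  set w : ℝ → ℝ := fun s => s * Real.tanh (π * s) with hw_def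
  have hw_cont : Continuous w := by
    have htanh : Continuous Real.tanh :=
      Differentiable.continuous (fun x => (aux_hasDerivAt_tanh x).differentiableAt)
    exact continuous_id.mul (htanh.comp (continuous_const.mul continuous_id))
  have hw_abs : ∀ s, |w s| ≤ |s| := by
    intro s
    rw [hw_def]
    calc |s * Real.tanh (π * s)| = |s| * |Real.tanh (π * s)| := abs_mul _ _
      _ ≤ |s| * 1 := mul_le_mul_of_nonneg_left (aux_abs_tanh_le _) (abs_nonneg s)
      _ = |s| := mul_one _
  -- integrand bound
  have hkey : ∀ t s : ℝ, ‖h (t - s) * ((w s : ℝ) : ℂ)‖ ≤ (1 + |t|) * bnd (t - s) := by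
    intro t s
    rw [norm_mul, Complex.norm_real, Real.norm_eq_abs]
    have h1 : |s| ≤ |t - s| + |t| := by
      have := abs_sub_abs_le_abs_sub s t
      have h2 := abs_sub s t
      calc |s| = |s - t + t| := by ring_nf
        _ ≤ |s - t| + |t| := abs_add_le _ _
        _ = |t - s| + |t| := by rw [abs_sub_comm]
    have h2 := hCh' (t - s)
    have h3 := hw_abs s
    have hn := norm_nonneg (h (t - s))
    have ha := abs_nonneg (t - s)
    have hb := abs_nonneg t
    calc ‖h (t - s)‖ * |w s| ≤ ‖h (t - s)‖ * (|t - s| + |t|) :=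
          mul_le_mul_of_nonneg_left (h3.trans h1) hn
      _ ≤ (1 + |t|) * (‖h (t - s)‖ * (1 + |t - s|)) := by
          nlinarith [mul_nonneg hn ha, mul_nonneg hn hb, mul_nonneg (mul_nonneg hn ha) hb]
      _ ≤ (1 + |t|) * bnd (t - s) :=
          mul_le_mul_of_nonneg_left h2 (by linarith)
  have hws_cont : ∀ t : ℝ, Continuous (fun s => h (t - s) * ((w s : ℝ) : ℂ)) := by
    intro t
    exact (hcont.comp (continuous_const.sub continuous_id)).mul
      (Complex.continuous_ofReal.comp hw_cont)
  have hws_int : ∀ t : ℝ, Integrable (fun s => h (t - s) * ((w s : ℝ) : ℂ)) := by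
    intro t
    exact ((hbnd_int_t t).const_mul (1 + |t|)).mono' (hws_cont t).aestronglyMeasurable
      (Filter.Eventually.of_forall (hkey t))
  -- the moment integral
  have hmom_int : Integrable (fun u : ℝ => ‖h u‖ * |u|) := by
    apply hbnd_int.mono' (hcont.norm.mul _root_.continuous_abs).aestronglyMeasurable
    apply Filter.Eventually.of_forall
    intro u
    show ‖‖h u‖ * |u|‖ ≤ bnd u
    rw [Real.norm_eq_abs, _root_.abs_of_nonneg (mul_nonneg (norm_nonneg _) (abs_nonneg _))]
    nlinarith [hCh' u, norm_nonneg (h u), abs_nonneg u]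
  set M : ℝ := ∫ u : ℝ, ‖h u‖ * |u| with hM_def
  have hM_nonneg : 0 ≤ M :=
    integral_nonneg (fun u => mul_nonneg (norm_nonneg _) (abs_nonneg _))
  have hmom_t : ∀ t : ℝ, ∫ s : ℝ, ‖h (t - s)‖ * |t - s| = M := fun t =>
    integral_sub_left_eq_self (fun u => ‖h u‖ * |u|) volume t
  have hone : ∀ t : ℝ, ∫ s : ℝ, h (t - s) = 1 := by
    intro t
    rw [integral_sub_left_eq_self h volume t, hint]
  -- the smoothed weight
  set φ : ℝ → ℂ := fun t => ∫ s : ℝ, h (t - s) * ((w s : ℝ) : ℂ) with hφ_def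
  -- pointwise estimate
  have hφ_est : ∀ t : ℝ, ‖φ t - ((|t| : ℝ) : ℂ)‖ ≤ 2 * M + 1 := by
    intro t
    have i1 : ∫ s : ℝ, h (t - s) * ((w t : ℝ) : ℂ) = ((w t : ℝ) : ℂ) := by
      rw [integral_mul_const, hone t, one_mul]
    have i2 : φ t - ((w t : ℝ) : ℂ)
        = ∫ s : ℝ, (h (t - s) * ((w s : ℝ) : ℂ) - h (t - s) * ((w t : ℝ) : ℂ)) := by
      rw [integral_sub (hws_int t) ((hh_int_t t).mul_const _), i1, hφ_def]
    have i3 : ‖φ t - ((w t : ℝ) : ℂ)‖ ≤ 2 * M := by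
      rw [i2]
      have bound : ∀ s : ℝ, ‖h (t - s) * ((w s : ℝ) : ℂ) - h (t - s) * ((w t : ℝ) : ℂ)‖
          ≤ 2 * (‖h (t - s)‖ * |t - s|) := by
        intro s
        rw [← mul_sub, norm_mul]
        have : ‖((w s : ℝ) : ℂ) - ((w t : ℝ) : ℂ)‖ = |w s - w t| := by
          rw [← Complex.ofReal_sub, Complex.norm_real, Real.norm_eq_abs]
        rw [this]
        have hlip := aux_lipschitz.dist_le_mul s t
        rw [Real.dist_eq, Real.dist_eq] at hlip
        have hlip' : |w s - w t| ≤ 2 * |t - s| := by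
          rw [abs_sub_comm t s]
          calc |w s - w t| ≤ 2 * |s - t| := by exact_mod_cast hlip
            _ = 2 * |s - t| := rfl
        nlinarith [norm_nonneg (h (t - s)), abs_nonneg (t - s),
          mul_le_mul_of_nonneg_left hlip' (norm_nonneg (h (t - s)))]
      calc ‖∫ s : ℝ, (h (t - s) * ((w s : ℝ) : ℂ) - h (t - s) * ((w t : ℝ) : ℂ))‖
          ≤ ∫ s : ℝ, 2 * (‖h (t - s)‖ * |t - s|) := by
            apply norm_integral_le_of_norm_le
            · exact (hmom_int.comp_sub_left t).const_mul 2
            · exact Filter.Eventually.of_forall bound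
        _ = 2 * ∫ s : ℝ, ‖h (t - s)‖ * |t - s| := integral_const_mul 2 _
        _ = 2 * M := by rw [hmom_t t]
    have i4 : ‖((w t : ℝ) : ℂ) - ((|t| : ℝ) : ℂ)‖ ≤ 1 := by
      rw [← Complex.ofReal_sub, Complex.norm_real, Real.norm_eq_abs]
      exact aux_psi_close t
    calc ‖φ t - ((|t| : ℝ) : ℂ)‖
        = ‖(φ t - ((w t : ℝ) : ℂ)) + (((w t : ℝ) : ℂ) - ((|t| : ℝ) : ℂ))‖ := by ring_nf
      _ ≤ ‖φ t - ((w t : ℝ) : ℂ)‖ + ‖((w t : ℝ) : ℂ) - ((|t| : ℝ) : ℂ)‖ := norm_add_le _ _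
      _ ≤ 2 * M + 1 := add_le_add i3 i4
  -- continuity of φ
  have hφ_cont : Continuous φ := by
    rw [continuous_iff_continuousAt]
    intro t₀
    apply continuousAt_of_dominated (bound := fun s => (2 + |t₀|) * (3 * bnd (t₀ - s)))
    · exact Filter.Eventually.of_forall fun t => (hws_cont t).aestronglyMeasurable
    · have hball : ∀ᶠ t in nhds t₀, t ∈ Metric.closedBall t₀ 1 :=
        Metric.closedBall_mem_nhds t₀ one_pos
      filter_upwards [hball] with t ht
      apply Filter.Eventually.of_forall
      intro s
      have h1 : |t - t₀| ≤ 1 := by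
        rw [Metric.mem_closedBall, Real.dist_eq] at ht; exact ht
      have h2 : |t| ≤ |t₀| + 1 := by
        have := abs_add_le (t - t₀) t₀
        simp only [sub_add_cancel] at this
        linarith [this]
      have h3 := hkey t s
      have h4 : bnd (t - s) ≤ 3 * bnd (t₀ - s) := by
        have e1 : (0:ℝ) < 1 + (t - s) ^ 2 := by positivity
        have e2 : (0:ℝ) < 1 + (t₀ - s) ^ 2 := by positivity
        have e3 : 1 + (t₀ - s) ^ 2 ≤ 3 * (1 + (t - s) ^ 2) := by
          have e4 : (t₀ - s) ^ 2 ≤ 2 * (t - s) ^ 2 + 2 * (t₀ - t) ^ 2 := by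
            nlinarith [sq_nonneg ((t-s) + (t₀ - t)), sq_nonneg ((t-s) - (t₀ - t))]
          have h5 : (t₀ - t) ^ 2 ≤ 1 := by
            rw [abs_sub_comm] at h1
            nlinarith [abs_nonneg (t₀ - t), _root_.sq_abs (t₀ - t)]
          nlinarith
        have eb1 : bnd (t - s) = Ch / (1 + (t - s) ^ 2) := by
          show Ch * (1 + (t - s) ^ 2)⁻¹ = _
          ring
        have eb2 : 3 * bnd (t₀ - s) = (3 * Ch) / (1 + (t₀ - s) ^ 2) := by
          show 3 * (Ch * (1 + (t₀ - s) ^ 2)⁻¹) = _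
          ring
        rw [eb1, eb2, div_le_div_iff₀ e1 e2]
        nlinarith [mul_le_mul_of_nonneg_left e3 hChpos.le]
      calc ‖h (t - s) * ((w s : ℝ) : ℂ)‖ ≤ (1 + |t|) * bnd (t - s) := h3
        _ ≤ (2 + |t₀|) * bnd (t - s) := by
            apply mul_le_mul_of_nonneg_right _ (hbnd_nonneg _)
            linarith
        _ ≤ (2 + |t₀|) * (3 * bnd (t₀ - s)) := by
            apply mul_le_mul_of_nonneg_left h4
            linarith [abs_nonneg t₀]
    · exact ((hbnd_int_t t₀).const_mul 3).const_mul (2 + |t₀|)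
    · apply Filter.Eventually.of_forall
      intro s
      exact ((hcont.comp (continuous_id.sub continuous_const)).mul continuous_const).continuousAt
  -- the trace identity in terms of h and φ
  set cA : ℂ := (A : ℂ) / (2 * (π : ℂ)) with hcA_def
  have hFφ : ∀ t : ℝ, (∑' j : ℤ, h (t - r j)) = cA * φ t := by
    intro t
    have tr := (trace g hg hgsupp hgsub t).2
    have e2 : ∀ x : ℝ, (∫ u : ℝ, g u * Complex.exp (-Complex.I * u * ((t : ℂ) - (x : ℂ))))
        = h (t - x) := by
      intro x
      rw [hdef (t - x)]
      simp only [Complex.ofReal_sub]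
    simp only [e2] at tr
    exact tr
  refine ⟨‖cA‖ * (2 * M + 1) * 2 + 1, by positivity, fun lam hlam => ?_⟩
  have hlam0 : 0 < lam := lt_of_lt_of_le one_pos hlam
  -- compute the interval integral of |t|
  have habs_real : (∫ t in (-lam)..lam, |t|) = lam ^ 2 := by
    have hi1 : (∫ t in (-lam)..(0:ℝ), |t|) = lam ^ 2 / 2 := by
      rw [intervalIntegral.integral_congr (g := fun t => -t)]
      · rw [intervalIntegral.integral_neg, integral_id]
        ring
      · intro x hx
        rw [Set.uIcc_of_le (by linarith : -lam ≤ 0)] at hx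
        exact _root_.abs_of_nonpos hx.2
    have hi2 : (∫ t in (0:ℝ)..lam, |t|) = lam ^ 2 / 2 := by
      rw [intervalIntegral.integral_congr (g := fun t => t)]
      · rw [integral_id]; ring
      · intro x hx
        rw [Set.uIcc_of_le (by linarith : (0:ℝ) ≤ lam)] at hx
        exact _root_.abs_of_nonneg hx.1
    rw [← intervalIntegral.integral_add_adjacent_intervals (b := (0:ℝ))
      (_root_.continuous_abs.intervalIntegrable _ _) (_root_.continuous_abs.intervalIntegrable _ _),
      hi1, hi2]
    ring
  have habs_c : (∫ t in (-lam)..lam, ((|t| : ℝ) : ℂ)) = ((lam ^ 2 : ℝ) : ℂ) := by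
    rw [intervalIntegral.integral_ofReal, habs_real]
  -- the integral identity
  have hstep : (∫ t in (-lam)..lam, ∑' j : ℤ, h (t - r j)) = cA * ∫ t in (-lam)..lam, φ t := by
    simp only [hFφ]
    rw [intervalIntegral.integral_const_mul]
  rw [hstep]
  have hφ_ii : IntervalIntegrable φ volume (-lam) lam := hφ_cont.intervalIntegrable _ _
  have habs_ii : IntervalIntegrable (fun t : ℝ => ((|t| : ℝ) : ℂ)) volume (-lam) lam :=
    (Complex.continuous_ofReal.comp _root_.continuous_abs).intervalIntegrable _ _
  have hsub : (∫ t in (-lam)..lam, (φ t - ((|t| : ℝ) : ℂ)))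
      = (∫ t in (-lam)..lam, φ t) - ((lam ^ 2 : ℝ) : ℂ) := by
    rw [intervalIntegral.integral_sub hφ_ii habs_ii, habs_c]
  have hnorm1 : ‖(∫ t in (-lam)..lam, φ t) - ((lam ^ 2 : ℝ) : ℂ)‖ ≤ (2 * M + 1) * (2 * lam) := by
    rw [← hsub]
    have := intervalIntegral.norm_integral_le_of_norm_le_const
      (C := 2 * M + 1) (f := fun t => φ t - ((|t| : ℝ) : ℂ)) (a := -lam) (b := lam)
      (fun x _ => hφ_est x)
    calc ‖∫ t in (-lam)..lam, (φ t - ((|t| : ℝ) : ℂ))‖ ≤ (2 * M + 1) * |lam - (-lam)| := this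
      _ = (2 * M + 1) * (2 * lam) := by
          rw [show lam - (-lam) = 2 * lam by ring, _root_.abs_of_pos (by linarith)]
  have hfinal : cA * (∫ t in (-lam)..lam, φ t) - cA * ((lam : ℂ)) ^ 2
      = cA * ((∫ t in (-lam)..lam, φ t) - ((lam ^ 2 : ℝ) : ℂ)) := by
    push_cast
    ring
  calc ‖cA * (∫ t in (-lam)..lam, φ t) - cA * (lam : ℂ) ^ 2‖
      = ‖cA‖ * ‖(∫ t in (-lam)..lam, φ t) - ((lam ^ 2 : ℝ) : ℂ)‖ := by
        rw [hfinal, norm_mul]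
    _ ≤ ‖cA‖ * ((2 * M + 1) * (2 * lam)) :=
        mul_le_mul_of_nonneg_left hnorm1 (norm_nonneg _)
    _ = (‖cA‖ * (2 * M + 1) * 2) * lam := by ring
    _ ≤ (‖cA‖ * (2 * M + 1) * 2 + 1) * lam := by nlinarith
end

section
/- Let Γ denote the complex Gamma function and let h : ℝ → ℂ be measurable with |h(u)| ≤ C₁(1 + |u|)^{−3} for all u ∈ ℝ. Then there exists C > 0 such that for all t ∈ ℝ, | ∫_ℝ h(t − r) (Γ′/Γ)(1 + ir) dr | ≤ C · log(4 + |t|). -/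
open Real MeasureTheory Complex

/-!
Write `ψ = Γ'/Γ`. Legendre's duplication formula gives
`2 ψ(s) = ψ(s/2) + ψ(s/2 + 1/2) + 2 log 2`, and `ψ(s/2) = ψ(s/2 + 1) - 2/s`; for `1 ≤ Re s ≤ 2`
the arguments `s/2 + 1/2` and `s/2 + 1` lie again in that strip with half the imaginary part,
so doubling the height of the strip costs only an additive constant. Starting from compactness
of a unit box this gives `ψ(1 + ir) = O(log(4 + |r|))`. Finally
`log(4 + |r|) ≤ 2 log(4 + |t|) log(4 + |t - r|)`, and the cubic decay of `h` absorbs the second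
factor, leaving the integrable kernel `(1 + (t - r)²)⁻¹`.
-/

lemma one_le_log_four_add {x : ℝ} (hx : 0 ≤ x) : 1 ≤ Real.log (4 + x) := by
  rw [Real.le_log_iff_exp_le (by linarith)]
  linarith [Real.exp_one_lt_d9]

lemma exists_le_two_pow_and_le_three_mul_log {x : ℝ} (hx : 0 ≤ x) :
    ∃ n : ℕ, x ≤ 2 ^ n ∧ (n : ℝ) ≤ 3 * Real.log (4 + x) := by
  refine ⟨⌈Real.logb 2 (4 + x)⌉₊, ?_, ?_⟩
  · calc x ≤ 4 + x := by linarith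
      _ = 2 ^ Real.logb 2 (4 + x) := (Real.rpow_logb two_pos (by norm_num) (by linarith)).symm
      _ ≤ 2 ^ (⌈Real.logb 2 (4 + x)⌉₊ : ℝ) :=
          Real.rpow_le_rpow_of_exponent_le one_le_two (Nat.le_ceil _)
      _ = 2 ^ ⌈Real.logb 2 (4 + x)⌉₊ := Real.rpow_natCast _ _
  · have hL := one_le_log_four_add hx
    have hlogb : Real.logb 2 (4 + x) ≤ 2 * Real.log (4 + x) := by
      rw [Real.logb, div_le_iff₀ (Real.log_pos one_lt_two)]
      nlinarith [Real.log_two_gt_d9]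
    have hpos : 0 < Real.logb 2 (4 + x) := Real.logb_pos one_lt_two (by linarith)
    linarith [Nat.ceil_lt_add_one hpos.le]

lemma log_four_add_abs_sub_le (x y : ℝ) :
    Real.log (4 + |x - y|) ≤ 2 * Real.log (4 + |x|) * Real.log (4 + |y|) := by
  have hx := one_le_log_four_add (abs_nonneg x)
  have hy := one_le_log_four_add (abs_nonneg y)
  calc Real.log (4 + |x - y|) ≤ Real.log ((4 + |x|) * (4 + |y|)) :=
        Real.log_le_log (by positivity) (by nlinarith [abs_sub x y, abs_nonneg x, abs_nonneg y])
    _ = Real.log (4 + |x|) + Real.log (4 + |y|) := Real.log_mul (by positivity) (by positivity)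
    _ ≤ _ := by nlinarith

lemma zpow_neg_three_mul_log_four_add_le (u : ℝ) :
    (1 + |u|) ^ (-3 : ℤ) * Real.log (4 + |u|) ≤ 3 * (1 + u ^ 2)⁻¹ := by
  have hu : 0 < 1 + |u| := by positivity
  have hlog : Real.log (4 + |u|) ≤ 3 * (1 + |u|) := by
    linarith [Real.log_le_sub_one_of_pos (by positivity : (0 : ℝ) < 4 + |u|), abs_nonneg u]
  calc (1 + |u|) ^ (-3 : ℤ) * Real.log (4 + |u|) ≤ (1 + |u|) ^ (-3 : ℤ) * (3 * (1 + |u|)) := by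
        gcongr
    _ = 3 * ((1 + |u|) ^ 2)⁻¹ := by
        rw [zpow_neg, zpow_ofNat]
        field_simp
    _ ≤ 3 * (1 + u ^ 2)⁻¹ := by
        gcongr
        nlinarith [sq_abs u, abs_nonneg u]

namespace Complex

lemma ne_neg_natCast_of_two_mul_ne {s : ℂ} (hs : ∀ m : ℕ, 2 * s ≠ -m) : ∀ m : ℕ, s ≠ -m := by
  rintro m rfl
  exact hs (2 * m) (by push_cast; ring)

lemma add_half_ne_neg_natCast_of_two_mul_ne {s : ℂ} (hs : ∀ m : ℕ, 2 * s ≠ -m) :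
    ∀ m : ℕ, s + 1 / 2 ≠ -m := by
  intro m hm
  exact hs (2 * m + 1) (by rw [eq_sub_of_add_eq hm]; push_cast; ring)

lemma ne_neg_natCast_of_re_pos {s : ℂ} (hs : 0 < s.re) : ∀ m : ℕ, s ≠ -m := by
  rintro m rfl
  simp at hs
  linarith [hs]

theorem two_mul_digamma_two_mul {s : ℂ} (hs : ∀ m : ℕ, 2 * s ≠ -m) :
    2 * digamma (2 * s) = digamma s + digamma (s + 1 / 2) + 2 * Real.log 2 := by
  have hs₀ := ne_neg_natCast_of_two_mul_ne hs
  have hs₁ := add_half_ne_neg_natCast_of_two_mul_ne hs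
  have hpow : HasDerivAt (fun w : ℂ ↦ (2 : ℂ) ^ (1 - 2 * w))
      ((2 : ℂ) ^ (1 - 2 * s) * (-2 * log 2)) s :=
    ((hasDerivAt_id s).const_mul 2).const_sub 1 |>.const_cpow (.inl two_ne_zero) |>.congr_deriv
      (by simp only [id]; ring)
  have hpow₀ : (2 : ℂ) ^ (1 - 2 * s) ≠ 0 := cpow_ne_zero_iff.mpr (.inl two_ne_zero)
  have hshift : logDeriv (fun w ↦ Gamma (w + 1 / 2)) s = digamma (s + 1 / 2) := by
    simpa [Function.comp_def, digamma_def] using logDeriv_comp (g := fun w ↦ w + 1 / 2)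
      (differentiableAt_Gamma _ hs₁) (differentiableAt_id.add_const _)
  have hscale : logDeriv (fun w ↦ Gamma (2 * w)) s = 2 * digamma (2 * s) := by
    simpa [Function.comp_def, digamma_def, mul_comm] using logDeriv_comp (g := fun w ↦ 2 * w)
      (differentiableAt_Gamma _ hs) (differentiableAt_id.const_mul (2 : ℂ))
  have hlhs : logDeriv (fun w ↦ Gamma w * Gamma (w + 1 / 2)) s
      = digamma s + digamma (s + 1 / 2) := by
    rw [logDeriv_mul (g := fun w ↦ Gamma (w + 1 / 2)) s (Gamma_ne_zero hs₀) (Gamma_ne_zero hs₁)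
      (differentiableAt_Gamma s hs₀)
      ((differentiableAt_Gamma _ hs₁).comp s (differentiableAt_id.add_const (1 / 2))), hshift]
    rfl
  have hrhs : logDeriv (fun w ↦ Gamma (2 * w) * 2 ^ (1 - 2 * w) * (√π : ℂ)) s
      = 2 * digamma (2 * s) - 2 * log 2 := by
    rw [logDeriv_mul_const s _ (ofReal_ne_zero.mpr (Real.sqrt_pos.mpr pi_pos).ne'),
      logDeriv_mul (f := fun w ↦ Gamma (2 * w)) s (Gamma_ne_zero hs) hpow₀
        ((differentiableAt_Gamma _ hs).comp s (differentiableAt_id.const_mul 2))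
        hpow.differentiableAt, hscale, logDeriv_apply, hpow.deriv, mul_div_cancel_left₀ _ hpow₀]
    ring
  have hdup : (fun w ↦ Gamma w * Gamma (w + 1 / 2))
      = fun w ↦ Gamma (2 * w) * 2 ^ (1 - 2 * w) * (√π : ℂ) := funext Gamma_mul_Gamma_add_half
  rw [← hlhs, hdup, hrhs, ofReal_log zero_le_two]
  push_cast
  ring

theorem continuousOn_digamma : ContinuousOn digamma {s | 0 < s.re} := by
  have hΓ : DifferentiableOn ℂ Gamma {s | 0 < s.re} := fun s hs ↦
    (differentiableAt_Gamma s (ne_neg_natCast_of_re_pos hs)).differentiableWithinAt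
  exact ((hΓ.deriv (isOpen_lt continuous_const continuous_re)).continuousOn).div hΓ.continuousOn
    fun s hs ↦ Gamma_ne_zero_of_re_pos hs

theorem norm_digamma_le_of_half {s : ℂ} {M : ℝ} (hs : 1 ≤ s.re)
    (h₁ : ‖digamma (s / 2 + 1)‖ ≤ M) (h₂ : ‖digamma (s / 2 + 1 / 2)‖ ≤ M) :
    ‖digamma s‖ ≤ M + 2 := by
  set w := s / 2 with hw
  have hwre : 1 / 2 ≤ w.re := by simp [w]; linarith
  have hw₀ := ne_neg_natCast_of_re_pos (s := w) (by linarith)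
  have h2w : 2 * w = s := by rw [hw]; ring
  have hdup := two_mul_digamma_two_mul (s := w) (h2w ▸ ne_neg_natCast_of_re_pos (by linarith))
  rw [h2w, ← sub_eq_of_eq_add (digamma_apply_add_one w hw₀)] at hdup
  have hinv : ‖w⁻¹‖ ≤ 2 := by
    rw [norm_inv]
    exact inv_le_of_inv_le₀ (by norm_num) (by linarith [re_le_norm w])
  have hlog : Real.log 2 < 1 := by linarith [Real.log_two_lt_d9]
  have hlog₀ : ‖(2 * Real.log 2 : ℂ)‖ = 2 * Real.log 2 := by
    rw [← ofReal_ofNat, ← ofReal_mul, norm_real, Real.norm_of_nonneg (by positivity)]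
  have hnorm := congrArg norm hdup
  rw [norm_mul, Complex.norm_two] at hnorm
  linarith [norm_add_le (digamma (w + 1) - w⁻¹ + digamma (w + 1 / 2)) (2 * Real.log 2 : ℂ),
    norm_add_le (digamma (w + 1) - w⁻¹) (digamma (w + 1 / 2)), norm_sub_le (digamma (w + 1)) w⁻¹]

theorem exists_norm_digamma_le_of_abs_im_le_two_pow : ∃ B, 0 ≤ B ∧ ∀ n : ℕ,
    ∀ s ∈ Set.Icc (1 : ℝ) 2 ×ℂ Set.Icc (-2 ^ n) (2 ^ n), ‖digamma s‖ ≤ B + 2 * n := by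
  have hbox : ContinuousOn digamma (Set.Icc (1 : ℝ) 2 ×ℂ Set.Icc (-1) 1) :=
    continuousOn_digamma.mono fun s hs ↦ by
      simp only [mem_reProdIm, Set.mem_Icc] at hs
      exact zero_lt_one.trans_le hs.1.1
  obtain ⟨B, hB⟩ := (isCompact_Icc.reProdIm isCompact_Icc).exists_bound_of_continuousOn hbox
  refine ⟨max B 0, le_max_right _ _, fun n ↦ ?_⟩
  induction n with
  | zero =>
    intro s hs
    simp only [pow_zero, Nat.cast_zero, mul_zero, add_zero] at hs ⊢
    exact (hB s hs).trans (le_max_left _ _)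
  | succ n ih =>
    intro s hs
    simp only [mem_reProdIm, Set.mem_Icc, pow_succ] at hs
    have hstep := norm_digamma_le_of_half (M := max B 0 + 2 * n) hs.1.1
      (ih _ (by simp [mem_reProdIm]; constructor <;> constructor <;> linarith))
      (ih _ (by simp [mem_reProdIm]; constructor <;> constructor <;> linarith))
    push_cast
    linarith

theorem exists_norm_digamma_one_add_I_mul_le :
    ∃ A : ℝ, ∀ r : ℝ, ‖digamma (1 + I * r)‖ ≤ A * Real.log (4 + |r|) := by
  obtain ⟨B, hB₀, hB⟩ := exists_norm_digamma_le_of_abs_im_le_two_pow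
  refine ⟨B + 6, fun r ↦ ?_⟩
  obtain ⟨n, hrn, hn⟩ := exists_le_two_pow_and_le_three_mul_log (abs_nonneg r)
  have hL := one_le_log_four_add (abs_nonneg r)
  have hbound := hB n (1 + I * r) (by simpa [mem_reProdIm, ← abs_le] using hrn)
  nlinarith

end Complex

theorem norm_integral_mul_le_of_decay {f g : ℝ → ℂ} {C₁ A : ℝ}
    (hf : ∀ u, ‖f u‖ ≤ C₁ * (1 + |u|) ^ (-3 : ℤ)) (hg : ∀ r, ‖g r‖ ≤ A * Real.log (4 + |r|))
    (t : ℝ) : ‖∫ r, f (t - r) * g r‖ ≤ 6 * C₁ * A * π * Real.log (4 + |t|) := by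
  have hC₁ : 0 ≤ C₁ := by simpa using (norm_nonneg _).trans (hf 0)
  have hA : 0 ≤ A := nonneg_of_mul_nonneg_left ((norm_nonneg _).trans (hg 0))
    (Real.log_pos (by norm_num [abs_zero]))
  set L := Real.log (4 + |t|)
  have hpointwise (r : ℝ) : ‖f (t - r) * g r‖ ≤ 6 * C₁ * A * L * (1 + (t - r) ^ 2)⁻¹ := by
    have hlog := log_four_add_abs_sub_le t (t - r)
    rw [sub_sub_cancel] at hlog
    have hkernel := zpow_neg_three_mul_log_four_add_le (t - r)
    rw [norm_mul]
    calc ‖f (t - r)‖ * ‖g r‖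
        ≤ C₁ * (1 + |t - r|) ^ (-3 : ℤ) * (A * (2 * L * Real.log (4 + |t - r|))) := by
          gcongr
          · exact hf (t - r)
          · exact (hg r).trans (by gcongr)
      _ = 2 * C₁ * A * L * ((1 + |t - r|) ^ (-3 : ℤ) * Real.log (4 + |t - r|)) := by ring
      _ ≤ 2 * C₁ * A * L * (3 * (1 + (t - r) ^ 2)⁻¹) := by
          gcongr
          exact mul_nonneg (by positivity) (zero_le_one.trans (one_le_log_four_add (abs_nonneg t)))
      _ = _ := by ring
  calc ‖∫ r, f (t - r) * g r‖ ≤ ∫ r, 6 * C₁ * A * L * (1 + (t - r) ^ 2)⁻¹ :=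
        norm_integral_le_of_norm_le ((integrable_inv_one_add_sq.comp_sub_left t).const_mul _)
          (.of_forall hpointwise)
    _ = 6 * C₁ * A * π * L := by
        rw [integral_const_mul, integral_sub_left_eq_self (fun x ↦ (1 + x ^ 2)⁻¹) volume t,
          integral_univ_inv_one_add_sq]
        ring

theorem convolution_digamma_bound_general (h : ℝ → ℂ) (C₁ : ℝ)
    (hdecay : ∀ u : ℝ, ‖h u‖ ≤ C₁ * (1 + |u|) ^ (-3 : ℤ)) :
    ∃ C : ℝ, 0 < C ∧ ∀ t : ℝ,
      ‖∫ r : ℝ, h (t - r) *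
          (deriv Complex.Gamma (1 + Complex.I * r)
            / Complex.Gamma (1 + Complex.I * r))‖
        ≤ C * Real.log (4 + |t|) := by
  obtain ⟨A, hA⟩ := exists_norm_digamma_one_add_I_mul_le
  refine ⟨max (6 * C₁ * A * π) 1, by positivity, fun t ↦ ?_⟩
  calc _ ≤ 6 * C₁ * A * π * Real.log (4 + |t|) := norm_integral_mul_le_of_decay hdecay hA t
    _ ≤ _ := by
      gcongr
      · exact zero_le_one.trans (one_le_log_four_add (abs_nonneg t))
      · exact le_max_left _ _

/-- Convolving a kernel with cubic decay against the digamma function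
`Γ'/Γ(1 + ir)` gives a bound `O(log(4 + |t|))`. -/
theorem convolution_digamma_bound (h : ℝ → ℂ)
    (hmeas : Measurable h) (C₁ : ℝ)
    (hdecay : ∀ u : ℝ, ‖h u‖ ≤ C₁ * (1 + |u|) ^ (-3 : ℤ)) :
    ∃ C : ℝ, 0 < C ∧ ∀ t : ℝ,
      ‖∫ r : ℝ, h (t - r) *
          (deriv Complex.Gamma (1 + Complex.I * r)
            / Complex.Gamma (1 + Complex.I * r))‖
        ≤ C * Real.log (4 + |t|) :=
  convolution_digamma_bound_general h C₁ hdecay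
end

section
/- Let Γ denote the complex Gamma function and let h : ℝ → ℂ be measurable with |h(u)| ≤ C₁(1 + |u|)^{−3} for all u ∈ ℝ. Then there exists C > 0 such that for all λ ≥ 2, | ∫_{−λ}^{λ} ∫_ℝ h(t − r) (Γ′/Γ)(1 + ir) dr dt | ≤ C · λ · log λ. -/
open Real MeasureTheory Complex

/-!
On the line `Re z = 1`, shift `ψ = Γ'/Γ` by `n ≈ r²`: `ψ(z + n) = ψ(z) + ∑_{k<n} (z + k)⁻¹`, and the
sum is at most `harmonic n = O(log n)`. At `s = 1 + ir + n`, with `σ = Re s`, the weight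
`e^{-u} u^{σ-1}` of the Mellin integral for `Γ` concentrates near `u = σ`: from
`log (u/σ)² ≤ (u - σ)²/(σu)` and `∫ e^{-u} u^{σ-1} (u - σ)²/(σu) du = Γ(σ)/(σ - 1)` one gets
`‖Γ(s)‖ ≥ Γ(σ)/2` (as `(Im s)² ≤ σ - 1`) and `‖Γ'(s)‖ ≤ Γ(σ)(log σ + 1)`, so that
`‖ψ(1 + ir)‖ = O(log (2 + |r|))`. Since `log (2 + |r|) ≤ (1 + log (2 + |t|))(1 + |t - r|)`, the
convolution with `h` is `O(1 + log (2 + |t|))`, and integrating over `[-λ, λ]` gives `O(λ log λ)`.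
-/

open Set

-- With `x = e^{2y}` this is `|y| ≤ |sinh y|`.
lemma sq_log_le_sq_sub_one_div {x : ℝ} (hx : 0 < x) : Real.log x ^ 2 ≤ (x - 1) ^ 2 / x := by
  obtain ⟨y, rfl⟩ : ∃ y, x = Real.exp (2 * y) :=
    ⟨Real.log x / 2, by rw [mul_div_cancel₀ _ two_ne_zero, Real.exp_log hx]⟩
  have hsinh : (Real.exp (2 * y) - 1) ^ 2 / Real.exp (2 * y) = (2 * Real.sinh y) ^ 2 := by
    rw [Real.sinh_eq, show 2 * y = y + y by ring, Real.exp_add, Real.exp_neg]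
    field_simp
  have hy : |y| ≤ |Real.sinh y| := by
    rw [Real.abs_sinh]; exact Real.self_le_sinh_iff.mpr (abs_nonneg y)
  rw [Real.log_exp, hsinh, mul_pow, mul_pow]
  exact mul_le_mul_of_nonneg_left (sq_le_sq.mpr hy) (by norm_num)

lemma sq_log_div_le {u σ : ℝ} (hu : 0 < u) (hσ : 0 < σ) :
    Real.log (u / σ) ^ 2 ≤ (u - σ) ^ 2 / (σ * u) := by
  convert sq_log_le_sq_sub_one_div (div_pos hu hσ) using 1
  field_simp

lemma abs_log_le_log_add {u σ : ℝ} (hu : 0 < u) (hσ : 1 ≤ σ) :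
    |Real.log u| ≤ Real.log σ + 1 / 2 + (u - σ) ^ 2 / (σ * u) / 2 := by
  have hσ₀ : 0 < σ := by linarith
  have hsplit : Real.log u = Real.log σ + Real.log (u / σ) := by
    rw [Real.log_div hu.ne' hσ₀.ne']; ring
  have hAMGM : |Real.log (u / σ)| ≤ 1 / 2 + Real.log (u / σ) ^ 2 / 2 := by
    nlinarith [sq_nonneg (|Real.log (u / σ)| - 1), sq_abs (Real.log (u / σ))]
  calc |Real.log u| ≤ |Real.log σ| + |Real.log (u / σ)| := hsplit ▸ abs_add_le _ _
    _ ≤ Real.log σ + (1 / 2 + Real.log (u / σ) ^ 2 / 2) := by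
      rw [abs_of_nonneg (Real.log_nonneg hσ)]; gcongr
    _ ≤ _ := by linarith [sq_log_div_le hu hσ₀]

lemma exp_neg_mul_rpow_mul_sq_sub_div_eq {σ u : ℝ} (hσ : σ ≠ 0) (hu : 0 < u) :
    Real.exp (-u) * u ^ (σ - 1) * ((u - σ) ^ 2 / (σ * u)) =
      σ⁻¹ * (Real.exp (-u) * u ^ (σ + 1 - 1)) - 2 * (Real.exp (-u) * u ^ (σ - 1))
        + σ * (Real.exp (-u) * u ^ (σ - 1 - 1)) := by
  rw [add_sub_cancel_right, Real.rpow_sub_one hu.ne', Real.rpow_sub_one hu.ne',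
    Real.rpow_sub_one hu.ne']
  field_simp
  ring

lemma integrableOn_exp_neg_mul_rpow_mul_sq_sub_div {σ : ℝ} (hσ : 1 < σ) :
    IntegrableOn (fun u ↦ Real.exp (-u) * u ^ (σ - 1) * ((u - σ) ^ 2 / (σ * u))) (Ioi 0) := by
  have hint (s : ℝ) (hs : 0 < s) := Real.GammaIntegral_convergent hs
  refine IntegrableOn.congr_fun (f := fun u ↦ σ⁻¹ * (Real.exp (-u) * u ^ (σ + 1 - 1))
      - 2 * (Real.exp (-u) * u ^ (σ - 1)) + σ * (Real.exp (-u) * u ^ (σ - 1 - 1)))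
    ((((hint (σ + 1) (by linarith)).const_mul σ⁻¹).sub ((hint σ (by linarith)).const_mul 2)).add
      ((hint (σ - 1) (by linarith)).const_mul σ)) (fun u hu ↦ ?_) measurableSet_Ioi
  exact (exp_neg_mul_rpow_mul_sq_sub_div_eq (by positivity) hu).symm

lemma integral_exp_neg_mul_rpow_mul_sq_sub_div {σ : ℝ} (hσ : 1 < σ) :
    ∫ u in Ioi 0, Real.exp (-u) * u ^ (σ - 1) * ((u - σ) ^ 2 / (σ * u)) =
      Real.Gamma σ / (σ - 1) := by
  have h₁ : IntegrableOn (fun u ↦ σ⁻¹ * (Real.exp (-u) * u ^ (σ + 1 - 1))) (Ioi 0) :=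
    (Real.GammaIntegral_convergent (by linarith)).const_mul _
  have h₂ : IntegrableOn (fun u ↦ 2 * (Real.exp (-u) * u ^ (σ - 1))) (Ioi 0) :=
    (Real.GammaIntegral_convergent (by linarith)).const_mul _
  have h₃ : IntegrableOn (fun u ↦ σ * (Real.exp (-u) * u ^ (σ - 1 - 1))) (Ioi 0) :=
    (Real.GammaIntegral_convergent (by linarith)).const_mul _
  have hrec : Real.Gamma σ = (σ - 1) * Real.Gamma (σ - 1) := by
    simpa using Real.Gamma_add_one (s := σ - 1) (by linarith)
  rw [setIntegral_congr_fun measurableSet_Ioi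
      (fun u hu ↦ exp_neg_mul_rpow_mul_sq_sub_div_eq (by positivity) hu),
    integral_add (f := fun u ↦ σ⁻¹ * (Real.exp (-u) * u ^ (σ + 1 - 1))
      - 2 * (Real.exp (-u) * u ^ (σ - 1))) (h₁.sub h₂) h₃,
    integral_sub h₁ h₂, integral_const_mul, integral_const_mul, integral_const_mul,
    ← Real.Gamma_eq_integral (by linarith), ← Real.Gamma_eq_integral (by linarith),
    ← Real.Gamma_eq_integral (by linarith), Real.Gamma_add_one (by positivity), hrec]
  have : σ - 1 ≠ 0 := by linarith
  field_simp
  ring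

lemma deriv_Gamma_eq_integral {s : ℂ} (hs : 0 < s.re) :
    deriv Complex.Gamma s =
      ∫ u : ℝ in Ioi 0, (u : ℂ) ^ (s - 1) * (Real.log u * Real.exp (-u)) := by
  have hΓ : Complex.Gamma =ᶠ[nhds s] GammaIntegral := by
    filter_upwards [(isOpen_lt continuous_const continuous_re).mem_nhds hs] with z hz
      using Gamma_eq_integral hz
  exact ((hasDerivAt_GammaIntegral hs).congr_of_eventuallyEq hΓ).deriv

lemma norm_deriv_Gamma_le {s : ℂ} (hs : 1 < s.re) :
    ‖deriv Complex.Gamma s‖ ≤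
      Real.Gamma s.re * (Real.log s.re + 1 / 2 + 1 / (2 * (s.re - 1))) := by
  set σ := s.re
  have hbound : IntegrableOn (fun u ↦ (Real.log σ + 1 / 2) * (Real.exp (-u) * u ^ (σ - 1))
      + (Real.exp (-u) * u ^ (σ - 1) * ((u - σ) ^ 2 / (σ * u))) / 2) (Ioi 0) :=
    ((Real.GammaIntegral_convergent (by linarith)).const_mul _).add
      ((integrableOn_exp_neg_mul_rpow_mul_sq_sub_div hs).div_const _)
  calc ‖deriv Complex.Gamma s‖
      ≤ ∫ u : ℝ in Ioi 0, ‖(u : ℂ) ^ (s - 1) * (Real.log u * Real.exp (-u))‖ := by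
        rw [deriv_Gamma_eq_integral (by linarith)]; exact norm_integral_le_integral_norm _
    _ ≤ ∫ u : ℝ in Ioi 0, ((Real.log σ + 1 / 2) * (Real.exp (-u) * u ^ (σ - 1))
          + (Real.exp (-u) * u ^ (σ - 1) * ((u - σ) ^ 2 / (σ * u))) / 2) := by
        refine integral_mono_of_nonneg (.of_forall fun _ ↦ norm_nonneg _) hbound ?_
        filter_upwards [ae_restrict_mem measurableSet_Ioi] with u (hu : 0 < u)
        rw [norm_mul, norm_mul, norm_cpow_eq_rpow_re_of_pos hu, Complex.norm_real,
          Complex.norm_real, Real.norm_eq_abs, Real.norm_of_nonneg (Real.exp_pos _).le]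
        have := abs_log_le_log_add hu hs.le
        have : 0 ≤ Real.exp (-u) * u ^ (σ - 1) := by positivity
        simp only [sub_re, one_re]
        nlinarith
    _ = _ := by
        rw [integral_add ((Real.GammaIntegral_convergent (by linarith)).const_mul _)
            ((integrableOn_exp_neg_mul_rpow_mul_sq_sub_div hs).div_const _),
          integral_const_mul, integral_div, integral_exp_neg_mul_rpow_mul_sq_sub_div hs,
          ← Real.Gamma_eq_integral (by linarith)]
        have : σ - 1 ≠ 0 := by linarith
        field_simp

lemma re_exp_mul_exp_neg_mul_cpow (s : ℂ) {u : ℝ} (hu : 0 < u) :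
    (Complex.exp (-(I * s.im * Real.log s.re)) * (↑(Real.exp (-u)) * (u : ℂ) ^ (s - 1))).re =
      Real.exp (-u) * u ^ (s.re - 1) * Real.cos (s.im * (Real.log u - Real.log s.re)) := by
  rw [Complex.cpow_def_of_ne_zero (by exact_mod_cast hu.ne'), ← Complex.ofReal_log hu.le,
    Complex.ofReal_exp, ← Complex.exp_add, ← Complex.exp_add, Complex.exp_re,
    Real.rpow_def_of_pos hu, ← Real.exp_add]
  congr 2
  · simp [mul_comm]
  · simp only [ofReal_neg, add_im, neg_im, mul_im, mul_re, I_re, ofReal_re, zero_mul, I_im,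
      ofReal_im, mul_zero, sub_self, one_mul, zero_add, neg_zero, sub_im, one_im, sub_zero]
    ring

lemma Gamma_mul_one_sub_le_norm_Gamma {s : ℂ} (hs : 1 < s.re) :
    Real.Gamma s.re * (1 - s.im ^ 2 / (2 * (s.re - 1))) ≤ ‖Complex.Gamma s‖ := by
  set σ := s.re
  -- Rotating by `σ ^ (-i Im s)` turns the phase of the integrand into `Im s * log (u / σ)`,
  -- which is small where the weight `e^{-u} u^{σ-1}` concentrates.
  set c := Complex.exp (-(I * s.im * Real.log σ))
  have hc : ‖c‖ = 1 := by simp [c, Complex.norm_exp]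
  have hint := (GammaIntegral_convergent (s := s) (by linarith)).const_mul c
  have hlow : IntegrableOn (fun u ↦ Real.exp (-u) * u ^ (σ - 1)
      - s.im ^ 2 / 2 * (Real.exp (-u) * u ^ (σ - 1) * ((u - σ) ^ 2 / (σ * u)))) (Ioi 0) :=
    (Real.GammaIntegral_convergent (by linarith)).sub
      ((integrableOn_exp_neg_mul_rpow_mul_sq_sub_div hs).const_mul _)
  calc Real.Gamma σ * (1 - s.im ^ 2 / (2 * (σ - 1)))
      = ∫ u : ℝ in Ioi 0, (Real.exp (-u) * u ^ (σ - 1)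
          - s.im ^ 2 / 2 * (Real.exp (-u) * u ^ (σ - 1) * ((u - σ) ^ 2 / (σ * u)))) := by
        rw [integral_sub (Real.GammaIntegral_convergent (by linarith))
            ((integrableOn_exp_neg_mul_rpow_mul_sq_sub_div hs).const_mul _),
          integral_const_mul, integral_exp_neg_mul_rpow_mul_sq_sub_div hs,
          ← Real.Gamma_eq_integral (by linarith)]
        have : σ - 1 ≠ 0 := by linarith
        field_simp
    _ ≤ ∫ u : ℝ in Ioi 0, (c * (↑(Real.exp (-u)) * (u : ℂ) ^ (s - 1))).re := by
        refine setIntegral_mono_on hlow hint.re measurableSet_Ioi fun u (hu : 0 < u) ↦ ?_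
        rw [re_exp_mul_exp_neg_mul_cpow s hu]
        have hcos := Real.one_sub_sq_div_two_le_cos (x := s.im * (Real.log u - Real.log σ))
        have hlog : (Real.log u - Real.log σ) ^ 2 ≤ (u - σ) ^ 2 / (σ * u) := by
          rw [← Real.log_div hu.ne' (by linarith)]; exact sq_log_div_le hu (by linarith)
        have : 0 ≤ Real.exp (-u) * u ^ (σ - 1) := by positivity
        nlinarith [mul_le_mul_of_nonneg_left hlog (sq_nonneg s.im)]
    _ = (c * Complex.Gamma s).re := by
        rw [Complex.Gamma_eq_integral (by linarith), GammaIntegral, ← integral_const_mul]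
        exact integral_re hint
    _ ≤ ‖Complex.Gamma s‖ := by simpa [hc] using re_le_norm (c * Complex.Gamma s)

lemma digamma_add_nat {z : ℂ} (hz : ∀ m : ℕ, z ≠ -m) (n : ℕ) :
    digamma (z + n) = digamma z + ∑ k ∈ Finset.range n, (z + k)⁻¹ := by
  induction n with
  | zero => simp
  | succ n ih =>
    have hzn : ∀ m : ℕ, z + n ≠ -m := fun m h ↦ hz (n + m) (by push_cast; linear_combination h)
    rw [Nat.cast_succ, ← add_assoc, digamma_apply_add_one _ hzn, ih, Finset.sum_range_succ,
      add_assoc]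

lemma norm_digamma_le {s : ℂ} (hs : 2 ≤ s.re) (him : s.im ^ 2 ≤ s.re - 1) :
    ‖digamma s‖ ≤ 2 * (Real.log s.re + 1) := by
  have hΓ : 0 < Real.Gamma s.re := Real.Gamma_pos_of_pos (by linarith)
  have hden : Real.Gamma s.re / 2 ≤ ‖Complex.Gamma s‖ := by
    refine le_trans ?_ (Gamma_mul_one_sub_le_norm_Gamma (by linarith))
    have : s.im ^ 2 / (2 * (s.re - 1)) ≤ 1 / 2 := by
      rw [div_le_iff₀ (by linarith)]; linarith
    nlinarith
  have hnum : ‖deriv Complex.Gamma s‖ ≤ Real.Gamma s.re * (Real.log s.re + 1) := by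
    refine (norm_deriv_Gamma_le (by linarith)).trans (mul_le_mul_of_nonneg_left ?_ hΓ.le)
    have : 1 / (2 * (s.re - 1)) ≤ 1 / 2 := by gcongr; linarith
    linarith
  rw [digamma_def, logDeriv_apply, norm_div]
  calc ‖deriv Complex.Gamma s‖ / ‖Complex.Gamma s‖
      ≤ Real.Gamma s.re * (Real.log s.re + 1) / (Real.Gamma s.re / 2) :=
        div_le_div₀ (by have := Real.log_nonneg (by linarith : (1 : ℝ) ≤ s.re); positivity)
          hnum (by positivity) hden
    _ = 2 * (Real.log s.re + 1) := by field_simp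

lemma norm_sum_inv_add_le_harmonic {z : ℂ} (hz : 1 ≤ z.re) (n : ℕ) :
    ‖∑ k ∈ Finset.range n, (z + k)⁻¹‖ ≤ harmonic n := by
  rw [harmonic, Rat.cast_sum]
  refine (norm_sum_le _ _).trans (Finset.sum_le_sum fun k _ ↦ ?_)
  have hk : (k : ℝ) + 1 ≤ ‖z + k‖ :=
    (by rw [add_re, natCast_re]; linarith : (k : ℝ) + 1 ≤ (z + k).re).trans (re_le_norm _)
  rw [norm_inv]
  push_cast
  exact inv_anti₀ (by positivity) hk

lemma norm_digamma_one_add_I_mul_le (r : ℝ) :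
    ‖digamma (1 + I * r)‖ ≤ 11 * Real.log (2 + |r|) := by
  -- Shifting by `n ≥ r ^ 2` lands at `s` with `(Im s) ^ 2 ≤ Re s - 1`, where `Γ(s)` is large.
  set n : ℕ := ⌈r ^ 2⌉₊ + 1
  have hn : r ^ 2 ≤ n := (Nat.le_ceil _).trans (by push_cast [n]; linarith)
  have hn' : (n : ℝ) ≤ r ^ 2 + 2 := by
    push_cast [n]; linarith [Nat.ceil_lt_add_one (sq_nonneg r)]
  have hn₁ : (1 : ℝ) ≤ n := by push_cast [n]; linarith [Nat.cast_nonneg (α := ℝ) ⌈r ^ 2⌉₊]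
  set s := 1 + I * r + n
  have hsre : s.re = n + 1 := by simp [s, add_comm]
  have hsim : s.im = r := by simp [s]
  have hshift := digamma_add_nat (z := 1 + I * r) (fun m h ↦ by
    have : (1 : ℝ) = -m := by simpa using congrArg Complex.re h
    linarith [Nat.cast_nonneg (α := ℝ) m]) n
  set L := Real.log (2 + |r|)
  have hsq : (n : ℝ) + 1 ≤ (2 + |r|) ^ 2 := by nlinarith [abs_nonneg r, sq_abs r]
  have hlogσ : Real.log (n + 1) ≤ 2 * L := by
    have := Real.log_le_log (by positivity) hsq
    rwa [Real.log_pow, Nat.cast_ofNat] at this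
  have hlogn : Real.log n ≤ 2 * L :=
    (Real.log_le_log (by positivity) (by linarith)).trans hlogσ
  have hL : Real.log 2 ≤ L := Real.log_le_log (by norm_num) (by linarith [abs_nonneg r])
  have hψs := norm_digamma_le (s := s) (by rw [hsre]; linarith) (by rw [hsre, hsim]; linarith)
  have hsum := (norm_sum_inv_add_le_harmonic (z := 1 + I * r) (by simp) n).trans
    (harmonic_le_one_add_log n)
  rw [hsre] at hψs
  calc ‖digamma (1 + I * r)‖
      = ‖digamma s - ∑ k ∈ Finset.range n, (1 + I * r + k)⁻¹‖ := by rw [hshift, add_sub_cancel_right]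
    _ ≤ ‖digamma s‖ + ‖∑ k ∈ Finset.range n, (1 + I * r + k)⁻¹‖ := norm_sub_le _ _
    _ ≤ 11 * L := by linarith [Real.log_two_gt_d9]

lemma log_two_add_abs_le (r t : ℝ) :
    Real.log (2 + |r|) ≤ (1 + Real.log (2 + |t|)) * (1 + |t - r|) := by
  have hr : 2 + |r| ≤ (2 + |t|) * (2 + |t - r|) := by
    have : |r| ≤ |t| + |t - r| := by
      have := abs_sub_abs_le_abs_sub r t; rw [abs_sub_comm] at this; linarith
    nlinarith [abs_nonneg t, abs_nonneg (t - r)]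
  have hlog := Real.log_le_log (by positivity) hr
  rw [Real.log_mul (by positivity) (by positivity)] at hlog
  have := Real.log_le_sub_one_of_pos (by positivity : 0 < 2 + |t - r|)
  nlinarith [Real.log_nonneg (by linarith [abs_nonneg t] : (1 : ℝ) ≤ 2 + |t|), abs_nonneg (t - r)]

lemma one_add_abs_zpow_neg_three_mul_le (u : ℝ) :
    (1 + |u|) ^ (-3 : ℤ) * (1 + |u|) ≤ (1 + u ^ 2)⁻¹ := by
  rw [zpow_neg, zpow_ofNat, inv_mul_le_iff₀ (by positivity), ← div_eq_mul_inv,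
    le_div_iff₀ (by positivity)]
  nlinarith [abs_nonneg u, sq_abs u]

lemma norm_integral_comp_sub_mul_le {h f : ℝ → ℂ} {C₁ A : ℝ}
    (hh : ∀ u, ‖h u‖ ≤ C₁ * (1 + |u|) ^ (-3 : ℤ)) (hf : ∀ r, ‖f r‖ ≤ A * Real.log (2 + |r|))
    (t : ℝ) : ‖∫ r, h (t - r) * f r‖ ≤ π * (C₁ * A) * (1 + Real.log (2 + |t|)) := by
  have hC₁ : 0 ≤ C₁ := by simpa using (norm_nonneg _).trans (hh 0)
  have hA : 0 ≤ A := by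
    have := (norm_nonneg _).trans (hf 0)
    simp only [abs_zero, add_zero] at this
    exact nonneg_of_mul_nonneg_left this (Real.log_pos one_lt_two)
  set K := C₁ * A * (1 + Real.log (2 + |t|))
  have hK : Integrable fun r ↦ K * (1 + (t - r) ^ 2)⁻¹ :=
    ((integrable_comp_sub_left (fun v ↦ (1 + v ^ 2)⁻¹) t).mpr integrable_inv_one_add_sq).const_mul K
  have hpt (r : ℝ) : ‖h (t - r) * f r‖ ≤ K * (1 + (t - r) ^ 2)⁻¹ := calc
    ‖h (t - r) * f r‖ ≤ C₁ * (1 + |t - r|) ^ (-3 : ℤ) * (A * ((1 + Real.log (2 + |t|))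
        * (1 + |t - r|))) := by
      rw [norm_mul]
      gcongr
      · exact hh _
      · exact (hf r).trans (mul_le_mul_of_nonneg_left (log_two_add_abs_le r t) hA)
    _ = K * ((1 + |t - r|) ^ (-3 : ℤ) * (1 + |t - r|)) := by ring
    _ ≤ K * (1 + (t - r) ^ 2)⁻¹ := by
      gcongr
      · have := Real.log_nonneg (by linarith [abs_nonneg t] : (1 : ℝ) ≤ 2 + |t|); positivity
      · exact one_add_abs_zpow_neg_three_mul_le _
  calc ‖∫ r, h (t - r) * f r‖ ≤ ∫ r, K * (1 + (t - r) ^ 2)⁻¹ :=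
        norm_integral_le_of_norm_le hK (.of_forall hpt)
    _ = π * (C₁ * A) * (1 + Real.log (2 + |t|)) := by
      rw [integral_const_mul, integral_sub_left_eq_self (fun v ↦ (1 + v ^ 2)⁻¹),
        integral_univ_inv_one_add_sq]
      ring

lemma one_add_log_two_add_abs_le {t lam : ℝ} (hlam : 2 ≤ lam) (ht : |t| ≤ lam) :
    1 + Real.log (2 + |t|) ≤ 4 * Real.log lam := by
  have h₁ : Real.log (2 + |t|) ≤ 2 * Real.log lam := by
    rw [← Real.log_rpow (by linarith)]
    exact Real.log_le_log (by positivity) (by norm_num; nlinarith)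
  have h₂ : Real.log 2 ≤ Real.log lam := Real.log_le_log (by norm_num) hlam
  linarith [Real.log_two_gt_d9]

theorem double_integral_digamma_bound_general (h : ℝ → ℂ) (C₁ : ℝ)
    (hdecay : ∀ u : ℝ, ‖h u‖ ≤ C₁ * (1 + |u|) ^ (-3 : ℤ)) :
    ∃ C : ℝ, 0 < C ∧ ∀ lam : ℝ, 2 ≤ lam →
      ‖∫ t in (-lam)..lam, ∫ r : ℝ, h (t - r) *
          (deriv Complex.Gamma (1 + Complex.I * r)
            / Complex.Gamma (1 + Complex.I * r))‖
        ≤ C * lam * Real.log lam := by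
  have hC₁ : 0 ≤ C₁ := by simpa using (norm_nonneg _).trans (hdecay 0)
  refine ⟨88 * π * C₁ + 1, by positivity, fun lam hlam ↦ ?_⟩
  simp only [← logDeriv_apply, ← digamma_def]
  have hinner : ∀ t ∈ uIoc (-lam) lam, ‖∫ r : ℝ, h (t - r) * digamma (1 + I * r)‖ ≤
      π * (C₁ * 11) * (4 * Real.log lam) := by
    intro t ht
    rw [uIoc_of_le (by linarith)] at ht
    refine (norm_integral_comp_sub_mul_le hdecay norm_digamma_one_add_I_mul_le t).trans ?_
    gcongr
    exact one_add_log_two_add_abs_le hlam (abs_le.mpr ⟨ht.1.le, ht.2⟩)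
  have hlog : 0 ≤ Real.log lam := Real.log_nonneg (by linarith)
  calc _ ≤ π * (C₁ * 11) * (4 * Real.log lam) * |lam - -lam| :=
        intervalIntegral.norm_integral_le_of_norm_le_const hinner
    _ = 88 * π * C₁ * lam * Real.log lam := by
        rw [abs_of_nonneg (by linarith)]; ring
    _ ≤ (88 * π * C₁ + 1) * lam * Real.log lam := by nlinarith

/-- The double integral of the smoothed digamma function `Γ'/Γ(1 + ir)` is
`O(λ log λ)`. -/
theorem double_integral_digamma_bound (h : ℝ → ℂ)
    (hmeas : Measurable h) (C₁ : ℝ)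
    (hdecay : ∀ u : ℝ, ‖h u‖ ≤ C₁ * (1 + |u|) ^ (-3 : ℤ)) :
    ∃ C : ℝ, 0 < C ∧ ∀ lam : ℝ, 2 ≤ lam →
      ‖∫ t in (-lam)..lam, ∫ r : ℝ, h (t - r) *
          (deriv Complex.Gamma (1 + Complex.I * r)
            / Complex.Gamma (1 + Complex.I * r))‖
        ≤ C * lam * Real.log lam :=
  double_integral_digamma_bound_general h C₁ hdecay
end
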